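/- arXiv:2012.10257 — 7 statements merged into one kernel-verified Lean document; each statement's English description precedes it below -/
import Mathlib

section
/- Let ω: [0,∞) → [0,∞) be continuous with ω(0)=0, and suppose the only nonnegative solution u of u' = ω(u) on any interval [0,τ) with u(0)=0 is the zero function (i.e., ω is a uniqueness function). If u: [0,τ] → [0,∞) is continuous, u(0) = 0, and the lower right Dini derivative of u satisfies D₊u(t) ≤ ω(u(t)) for all t ∈ (0,τ), then u ≡ 0 on [0,τ]. -/
open Filter Topology

/-- Lower right Dini derivative. -/
noncomputable def diniLow (u : ℝ → ℝ) (t : ℝ) : ℝ :=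
  Filter.liminf (fun h => (u (t + h) - u t) / h) (nhdsWithin 0 (Set.Ioi 0))

/-- A uniqueness (Perron) function: continuous, nonnegative, `ω 0 = 0`, and the only
nonnegative solution of `u' = ω (u)` with `u 0 = 0` on any interval `[0, τ)` is zero. -/
def IsUniquenessFun (ω : ℝ → ℝ) : Prop :=
  ContinuousOn ω (Set.Ici 0) ∧ ω 0 = 0 ∧ (∀ x, 0 ≤ x → 0 ≤ ω x) ∧
  ∀ (τ : ℝ) (u : ℝ → ℝ), 0 < τ →
    (∀ t ∈ Set.Ico (0:ℝ) τ, 0 ≤ u t) → u 0 = 0 →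
    (∀ t ∈ Set.Ico (0:ℝ) τ, HasDerivAt u (ω (u t)) t) →
    ∀ t ∈ Set.Ico (0:ℝ) τ, u t = 0

open Filter Topology MeasureTheory Set

/-- From an ℝ-valued liminf bound, get frequent smallness, unless quotients blow up. -/
lemma freq_of_liminf_le {g : ℝ → ℝ} {l : Filter ℝ} {c d : ℝ}
    (hb : l.IsCoboundedUnder (· ≥ ·) g)
    (h : Filter.liminf g l ≤ c) (hcd : c < d) : ∃ᶠ x in l, g x < d :=
  Filter.frequently_lt_of_liminf_lt hb (h.trans_lt hcd)

lemma tendsto_atTop_of_not_cobounded {g : ℝ → ℝ} {l : Filter ℝ}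
    (hb : ¬ l.IsCoboundedUnder (· ≥ ·) g) : ∀ A : ℝ, ∀ᶠ x in l, A ≤ g x := by
  intro A
  rw [Filter.IsCoboundedUnder, Filter.IsCobounded] at hb
  push_neg at hb
  obtain ⟨a, ha, hAa⟩ := hb A
  rw [Filter.eventually_map] at ha
  filter_upwards [ha] with x hx
  exact le_trans hAa.le hx

/-- Lower bound on increments from a derivative lower bound. -/
lemma mul_sub_le_of_hasDerivAt {F F' : ℝ → ℝ} (h : ∀ x, HasDerivAt F (F' x) x)
    {c : ℝ} (hc : ∀ x, c ≤ F' x) {x y : ℝ} (hxy : x ≤ y) :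
    c * (y - x) ≤ F y - F x := by
  have hmono : Monotone (fun x => F x - c * x) := by
    apply monotone_of_hasDerivAt_nonneg (f' := fun x => F' x - c)
    · intro x
      exact ((h x).sub ((hasDerivAt_id x).const_mul c)).congr_deriv (by simp)
    · intro x; simpa using hc x
  have := hmono hxy
  simp only at this
  nlinarith [this]

lemma sub_le_mul_of_hasDerivAt {F F' : ℝ → ℝ} (h : ∀ x, HasDerivAt F (F' x) x)
    {d : ℝ} (hd : ∀ x, F' x ≤ d) {x y : ℝ} (hxy : x ≤ y) :
    F y - F x ≤ d * (y - x) := by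
  have hmono : Monotone (fun x => d * x - F x) := by
    apply monotone_of_hasDerivAt_nonneg (f' := fun x => d - F' x)
    · intro x
      exact (((hasDerivAt_id x).const_mul d).sub (h x)).congr_deriv (by simp)
    · intro x; simpa using hd x
  have := hmono hxy
  simp only at this
  nlinarith [this]

noncomputable def Gint (f : ℝ → ℝ) (ε x : ℝ) : ℝ := ∫ s in (0:ℝ)..x, (f s + ε)⁻¹

section Gprops
variable {f : ℝ → ℝ} {ε : ℝ}

lemma gcont (hf : Continuous f) (hf0 : ∀ x, 0 ≤ f x) (hε : 0 < ε) :
    Continuous (fun s => (f s + ε)⁻¹) := by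
  apply Continuous.inv₀ (by continuity)
  intro x
  have := hf0 x; positivity

lemma gderiv (hf : Continuous f) (hf0 : ∀ x, 0 ≤ f x) (hε : 0 < ε) (x : ℝ) :
    HasDerivAt (Gint f ε) ((f x + ε)⁻¹) x := by
  have hc := gcont hf hf0 hε
  exact intervalIntegral.integral_hasDerivAt_right (hc.intervalIntegrable _ _)
    (hc.stronglyMeasurableAtFilter _ _) hc.continuousAt

lemma gsm (hf : Continuous f) (hf0 : ∀ x, 0 ≤ f x) (hε : 0 < ε) :
    StrictMono (Gint f ε) := by
  apply strictMono_of_hasDerivAt_pos (gderiv hf hf0 hε)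
  intro x
  have := hf0 x; positivity

lemma gzero : Gint f ε 0 = 0 := by simp [Gint]

lemma gmono_eps (hf : Continuous f) (hf0 : ∀ x, 0 ≤ f x) {ε₁ ε₂ : ℝ} (h1 : 0 < ε₁)
    (h12 : ε₁ ≤ ε₂) {a : ℝ} (ha : 0 ≤ a) : Gint f ε₂ a ≤ Gint f ε₁ a := by
  have h2 : (0:ℝ) < ε₂ := lt_of_lt_of_le h1 h12
  apply intervalIntegral.integral_mono_on ha
    ((gcont hf hf0 h2).intervalIntegrable _ _) ((gcont hf hf0 h1).intervalIntegrable _ _)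
  intro x _
  apply inv_anti₀
  · have := hf0 x; positivity
  · linarith

lemma gsurj (hf : Continuous f) (hf0 : ∀ x, 0 ≤ f x) (hε : 0 < ε)
    {K : ℝ} (hK : ∀ x, f x ≤ K) : Function.Surjective (Gint f ε) := by
  have hKε : (0:ℝ) < K + ε := by have := (hf0 0).trans (hK 0); linarith
  have hlow : ∀ x y : ℝ, x ≤ y → (K + ε)⁻¹ * (y - x) ≤ Gint f ε y - Gint f ε x := by
    intro x y hxy
    apply mul_sub_le_of_hasDerivAt (gderiv hf hf0 hε) _ hxy
    intro z
    apply inv_anti₀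
    · have := hf0 z; positivity
    · linarith [hK z]
  have hcont : Continuous (Gint f ε) := by
    rw [continuous_iff_continuousAt]
    exact fun x => (gderiv hf hf0 hε x).continuousAt
  have httop : Tendsto (fun y => (K+ε)⁻¹ * y) atTop atTop :=
    Tendsto.const_mul_atTop (by positivity) tendsto_id
  have htbot : Tendsto (fun y => (K+ε)⁻¹ * y) atBot atBot :=
    Tendsto.const_mul_atBot (by positivity) tendsto_id
  apply Continuous.surjective hcont
  · apply tendsto_atTop_mono' atTop _ httop
    filter_upwards [Filter.eventually_ge_atTop (0:ℝ)] with y hy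
    have := hlow 0 y hy
    rw [gzero] at this
    nlinarith [this]
  · apply tendsto_atBot_mono' atBot _ htbot
    filter_upwards [Filter.eventually_le_atBot (0:ℝ)] with y hy
    have := hlow y 0 hy
    rw [gzero] at this
    nlinarith [this]

end Gprops

section Sol
variable {f : ℝ → ℝ} {ε : ℝ}

/-- Existence of the solution of `w' = f(w) + ε`, `w 0 = 0`, as inverse of `Gint`. -/
lemma exists_sol (hf : Continuous f) (hf0 : ∀ x, 0 ≤ f x) (hε : 0 < ε)
    {K : ℝ} (hK : ∀ x, f x ≤ K) :
    ∃ w : ℝ → ℝ, Continuous w ∧ StrictMono w ∧ w 0 = 0 ∧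
      (∀ t, HasDerivAt w (f (w t) + ε) t) ∧
      (∀ x, Gint f ε (w x) = x) ∧ (∀ x, w (Gint f ε x) = x) := by
  have hgsm := gsm hf hf0 hε
  have hgderiv := gderiv hf hf0 hε
  have hgsurj := gsurj hf hf0 hε hK
  set iso := StrictMono.orderIsoOfSurjective (Gint f ε) hgsm hgsurj with hiso
  have happ : ∀ x, iso x = Gint f ε x := fun x => rfl
  have hGw : ∀ x, Gint f ε (iso.symm x) = x := fun x => iso.apply_symm_apply x
  have hwG : ∀ x, iso.symm (Gint f ε x) = x := fun x => iso.symm_apply_apply x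
  have hw0 : iso.symm 0 = 0 := by
    have := hwG 0
    rwa [gzero] at this
  have hcs : Continuous (fun x => iso.symm x) := iso.symm.continuous
  refine ⟨fun x => iso.symm x, hcs, iso.symm.strictMono, hw0, ?_, hGw, hwG⟩
  intro t
  have hne : ((f (iso.symm t) + ε)⁻¹ : ℝ) ≠ 0 := by
    have := hf0 (iso.symm t); positivity
  have := HasDerivAt.of_local_left_inverse (hcs.continuousAt)
    (hgderiv (iso.symm t)) hne (Filter.Eventually.of_forall hGw)
  rwa [inv_inv] at this

end Sol

/-- Climb lemma: continuous function with vanishing right derivative on an open interval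
is nonincreasing there. -/
lemma climb {g : ℝ → ℝ} {c d : ℝ}
    (hcont : ∀ x ∈ Ioo c d, ContinuousAt g x)
    (hrd : ∀ x ∈ Ioo c d, ∀ e : ℝ, 0 < e → ∀ᶠ s in 𝓝[>] (0:ℝ), g (x + s) - g x < e * s) :
    ∀ x ∈ Ioo c d, ∀ y ∈ Ioo c d, x ≤ y → g y ≤ g x := by
  intro x hx y hy hxy
  have key : ∀ e : ℝ, 0 < e → g y ≤ g x + e * (y - x) := by
    intro e he
    have hRsub : Icc x y ⊆ Ioo c d := fun z hz =>
      ⟨lt_of_lt_of_le hx.1 hz.1, lt_of_le_of_lt hz.2 hy.2⟩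
    set R := Icc x y ∩ (fun z => g z - (g x + e * (z - x))) ⁻¹' (Iic 0) with hRdef
    have hgR : ∀ z, z ∈ R ↔ z ∈ Icc x y ∧ g z ≤ g x + e * (z - x) := by
      intro z
      simp [hRdef, sub_nonpos]
    have hclosed : IsClosed R := by
      apply ContinuousOn.preimage_isClosed_of_isClosed _ isClosed_Icc isClosed_Iic
      have hgc : ContinuousOn g (Icc x y) := fun z hz => (hcont z (hRsub hz)).continuousWithinAt
      exact hgc.sub ((continuousOn_const).add
        (continuousOn_const.mul ((continuousOn_id).sub continuousOn_const)))
    have hne : R.Nonempty := ⟨x, (hgR x).2 ⟨⟨le_refl x, hxy⟩, by simp⟩⟩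
    have hbdd : BddAbove R := ⟨y, fun z hz => ((hgR z).1 hz).1.2⟩
    set z0 := sSup R with hz0
    have hz0R : z0 ∈ R := hclosed.csSup_mem hne hbdd
    obtain ⟨⟨hxz0, hz0y⟩, hgz0⟩ := (hgR z0).1 hz0R
    rcases eq_or_lt_of_le hz0y with heq | hlt
    · rw [heq] at hgz0; exact hgz0
    · exfalso
      have hz0mem : z0 ∈ Ioo c d := hRsub ⟨hxz0, hz0y⟩
      have hev := hrd z0 hz0mem e he
      have hev2 : ∀ᶠ s in 𝓝[>] (0:ℝ), s < y - z0 :=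
        eventually_nhdsWithin_of_eventually_nhds (eventually_lt_nhds (by linarith))
      obtain ⟨s, hs1, hsy, hs0⟩ := (hev.and (hev2.and self_mem_nhdsWithin)).exists
      have hspos : (0:ℝ) < s := mem_Ioi.1 hs0
      have hz0s : z0 + s ∈ R := by
        rw [hgR]
        constructor
        · constructor <;> [linarith; linarith]
        · have : g (z0 + s) < g z0 + e * s := by linarith
          calc g (z0 + s) ≤ g z0 + e * s := this.le
            _ ≤ g x + e * (z0 - x) + e * s := by linarith
            _ = g x + e * (z0 + s - x) := by ring
      have := le_csSup hbdd hz0s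
      rw [← hz0] at this
      linarith
  by_contra hcon
  push_neg at hcon
  have : ∃ e : ℝ, 0 < e ∧ g x + e * (y - x) < g y := by
    rcases eq_or_lt_of_le hxy with rfl | hlt
    · exfalso; exact absurd le_rfl (not_le.2 hcon)
    · refine ⟨(g y - g x) / (2 * (y - x)), ?_, ?_⟩
      · have h1 : (0:ℝ) < g y - g x := by linarith
        have h2 : (0:ℝ) < y - x := by linarith
        positivity
      · have h2 : (0:ℝ) < y - x := by linarith
        have heq : (g y - g x) / (2 * (y - x)) * (y - x) = (g y - g x) / 2 := by
          field_simp
        rw [heq]; linarith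
  obtain ⟨e, he, hlt⟩ := this
  linarith [key e he]

/-- A monotone function that is strictly monotone on `(a,b)` has a point of right
continuity where the right difference quotients are frequently bounded below. -/
lemma exists_right_cont_quot {g : ℝ → ℝ} (hm : Monotone g) {a b : ℝ} (hab : a < b)
    (hsm : StrictMonoOn g (Set.Ioo a b)) :
    ∃ θ ∈ Set.Ioo a b, Tendsto g (𝓝[>] θ) (𝓝 (g θ)) ∧
      ∃ c : ℝ, 0 < c ∧ ∃ᶠ s in 𝓝[>] (0:ℝ), θ + s < b ∧ c * s ≤ g (θ + s) - g θ := by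
  by_contra H
  push_neg at H
  -- From the negation: at every right-continuity point the right derivative is 0.
  have hrd : ∀ x ∈ Ioo a b, ContinuousAt g x → ∀ e : ℝ, 0 < e →
      ∀ᶠ s in 𝓝[>] (0:ℝ), g (x + s) - g x < e * s := by
    intro x hx hcx e he
    have hT : Tendsto g (𝓝[>] x) (𝓝 (g x)) := hcx.continuousWithinAt
    have hev1 := H x hx hT e he
    have hev2 : ∀ᶠ s in 𝓝[>] (0:ℝ), x + s < b := by
      apply eventually_nhdsWithin_of_eventually_nhds
      have : ∀ᶠ s in 𝓝 (0:ℝ), s < b - x := eventually_lt_nhds (by linarith [hx.2])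
      filter_upwards [this] with s hs; linarith
    filter_upwards [hev1, hev2] with s hs1 hs2
    exact hs1 hs2
  -- Atom density: every open subinterval contains a discontinuity point.
  have hdense : ∀ p q : ℝ, a ≤ p → p < q → q ≤ b → ∃ x ∈ Ioo p q, ¬ContinuousAt g x := by
    intro p q hap hpq hqb
    by_contra hac
    push_neg at hac
    have hsub : Ioo p q ⊆ Ioo a b := fun z hz =>
      ⟨lt_of_le_of_lt hap hz.1, lt_of_lt_of_le hz.2 hqb⟩
    have hcl := climb (c := p) (d := q) (fun x hx => hac x hx)
      (fun x hx e he => hrd x (hsub hx) (hac x hx) e he)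
    have hxm : p + (q - p)/3 ∈ Ioo p q := ⟨by linarith, by linarith⟩
    have hym : p + 2*(q - p)/3 ∈ Ioo p q := ⟨by linarith, by linarith⟩
    have h1 := hcl _ hxm _ hym (by linarith)
    have h2 := hsm (hsub hxm) (hsub hym) (by linarith)
    linarith
  -- countable discontinuity set
  have hD : Set.Countable {x | ¬ContinuousAt g x} := hm.countable_not_continuousAt
  obtain ⟨dseq, hdseq⟩ : ∃ dseq : ℕ → ℝ, insert a {x | ¬ContinuousAt g x} = Set.range dseq :=
    (hD.insert a).exists_eq_range (insert_nonempty _ _)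
  have hDran : {x | ¬ContinuousAt g x} ⊆ Set.range dseq := by
    rw [← hdseq]; exact subset_insert _ _
  -- jump positivity
  have hJ : ∀ x, ¬ContinuousAt g x → 0 < Function.rightLim g x - Function.leftLim g x := by
    intro x hx
    have hle := hm.leftLim_le_rightLim (le_refl x)
    rcases eq_or_lt_of_le hle with heq | hlt
    · exact absurd (hm.continuousAt_iff_leftLim_eq_rightLim.2 heq) hx
    · linarith
  -- one refinement step
  have hstep : ∀ (k : ℕ) (p q : ℝ), a < p → p < q → q ≤ b →
      ∃ p' q' : ℝ, p < p' ∧ p' < q' ∧ q' < q ∧ (¬ContinuousAt g q') ∧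
        q' - p' ≤ (1/2)^k ∧
        q' - p' ≤ Function.rightLim g q' - Function.leftLim g q' ∧
        dseq k ∉ Icc p' q' := by
    intro k p q hap hpq hqb
    -- choose a base interval (p₁, q₁) ⊆ (p,q) avoiding dseq k
    obtain ⟨p₁, q₁, hp₁, hq₁, hq₁q, havoid⟩ :
        ∃ p₁ q₁ : ℝ, p < p₁ ∧ p₁ < q₁ ∧ q₁ < q ∧ (dseq k < p₁ ∨ q₁ < dseq k) := by
      by_cases hd : dseq k ≤ p + (q - p)/2
      · exact ⟨p + 2*(q-p)/3, p + 3*(q-p)/4, by nlinarith, by nlinarith, by nlinarith,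
          Or.inl (by nlinarith)⟩
      · push_neg at hd
        exact ⟨p + (q-p)/4, p + (q-p)/3, by nlinarith, by nlinarith, by nlinarith,
          Or.inr (by nlinarith)⟩
    obtain ⟨x, hxm, hxd⟩ := hdense p₁ q₁ (by linarith) hq₁ (by linarith)
    have hJx := hJ x hxd
    have hmin : 0 < min ((1/2:ℝ)^k) (Function.rightLim g x - Function.leftLim g x) :=
      lt_min (by positivity) hJx
    refine ⟨max p₁ (x - min ((1/2:ℝ)^k) (Function.rightLim g x - Function.leftLim g x)),
      x, ?_, ?_, ?_, hxd, ?_, ?_, ?_⟩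
    · exact lt_of_lt_of_le hp₁ (le_max_left _ _)
    · exact max_lt hxm.1 (by linarith)
    · linarith [hxm.2]
    · have h1 : x - min ((1/2:ℝ)^k) (Function.rightLim g x - Function.leftLim g x) ≤
        max p₁ (x - min ((1/2:ℝ)^k) (Function.rightLim g x - Function.leftLim g x)) :=
        le_max_right _ _
      have h2 := min_le_left ((1/2:ℝ)^k) (Function.rightLim g x - Function.leftLim g x)
      linarith
    · have h1 : x - min ((1/2:ℝ)^k) (Function.rightLim g x - Function.leftLim g x) ≤
        max p₁ (x - min ((1/2:ℝ)^k) (Function.rightLim g x - Function.leftLim g x)) :=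
        le_max_right _ _
      have h2 := min_le_right ((1/2:ℝ)^k) (Function.rightLim g x - Function.leftLim g x)
      linarith
    · rcases havoid with h | h
      · intro hc
        exact absurd hc.1 (not_le.2 (lt_of_lt_of_le h (le_max_left _ _)))
      · intro hc
        exact absurd hc.2 (not_le.2 (lt_trans hxm.2 h))
  -- build the subtype-valued refinement step
  have hstep' : ∀ (k : ℕ) (pq : {pq : ℝ × ℝ // a < pq.1 ∧ pq.1 < pq.2 ∧ pq.2 ≤ b}),
      ∃ pq' : {pq : ℝ × ℝ // a < pq.1 ∧ pq.1 < pq.2 ∧ pq.2 ≤ b},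
        pq.1.1 < pq'.1.1 ∧ pq'.1.2 < pq.1.2 ∧ (¬ContinuousAt g pq'.1.2) ∧
        pq'.1.2 - pq'.1.1 ≤ (1/2)^k ∧
        pq'.1.2 - pq'.1.1 ≤ Function.rightLim g pq'.1.2 - Function.leftLim g pq'.1.2 ∧
        dseq k ∉ Icc pq'.1.1 pq'.1.2 := by
    rintro k ⟨⟨p, q⟩, hp, hpq, hqb⟩
    obtain ⟨p', q', h1, h2, h3, h4, h5, h6, h7⟩ := hstep k p q hp hpq hqb
    exact ⟨⟨⟨p', q'⟩, lt_trans hp h1, h2, le_trans (le_of_lt h3) hqb⟩, h1, h3, h4, h5, h6, h7⟩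
  choose F hF1 hF2 hF3 hF4 hF5 hF6 using hstep'
  set seq : ℕ → {pq : ℝ × ℝ // a < pq.1 ∧ pq.1 < pq.2 ∧ pq.2 ≤ b} :=
    fun k => Nat.rec (motive := fun _ => {pq : ℝ × ℝ // a < pq.1 ∧ pq.1 < pq.2 ∧ pq.2 ≤ b})
      ⟨((a+b)/2, b), by constructor; · linarith
                        constructor; · linarith
                        exact le_refl b⟩
      (fun n s => F n s) k with hseqdef
  have hseqsucc : ∀ k, seq (k+1) = F k (seq k) := fun k => rfl
  set pp : ℕ → ℝ := fun k => (seq k).1.1 with hpp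
  set qq : ℕ → ℝ := fun k => (seq k).1.2 with hqq
  have hpq : ∀ k, pp k < qq k := fun k => (seq k).2.2.1
  have hqqb : ∀ k, qq k ≤ b := fun k => (seq k).2.2.2
  have happ : ∀ k, a < pp k := fun k => (seq k).2.1
  have hpsucc : ∀ k, pp k < pp (k+1) := by
    intro k; have := hF1 k (seq k); rwa [← hseqsucc k] at this
  have hqsucc : ∀ k, qq (k+1) < qq k := by
    intro k; have := hF2 k (seq k); rwa [← hseqsucc k] at this
  have hatom : ∀ k, ¬ContinuousAt g (qq (k+1)) := by
    intro k; have := hF3 k (seq k); rwa [← hseqsucc k] at this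
  have hlen : ∀ k, qq (k+1) - pp (k+1) ≤ (1/2)^k := by
    intro k; have := hF4 k (seq k); rwa [← hseqsucc k] at this
  have hjump : ∀ k, qq (k+1) - pp (k+1) ≤
      Function.rightLim g (qq (k+1)) - Function.leftLim g (qq (k+1)) := by
    intro k; have := hF5 k (seq k); rwa [← hseqsucc k] at this
  have havoid : ∀ k, dseq k ∉ Icc (pp (k+1)) (qq (k+1)) := by
    intro k; have := hF6 k (seq k); rwa [← hseqsucc k] at this
  have hpmono : StrictMono pp := strictMono_nat_of_lt_succ hpsucc
  have hqanti : StrictAnti qq := strictAnti_nat_of_succ_lt hqsucc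
  have hcross : ∀ j k, pp j < qq k := by
    intro j k
    rcases le_total j k with h | h
    · exact lt_of_le_of_lt (hpmono.monotone h) (hpq k)
    · exact lt_of_lt_of_le (hpq j) (hqanti.antitone h)
  have hbdd : BddAbove (Set.range pp) := ⟨b, by rintro _ ⟨j, rfl⟩; exact (hcross j 0).le.trans (hqqb 0)⟩
  set θ := ⨆ k, pp k with hθ
  have hpθ : ∀ k, pp k < θ := fun k => lt_of_lt_of_le (hpsucc k) (le_ciSup hbdd (k+1))
  have hθq : ∀ k, θ < qq k := by
    intro k
    have h1 : θ ≤ qq (k+1) := ciSup_le (fun j => (hcross j (k+1)).le)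
    exact lt_of_le_of_lt h1 (hqsucc k)
  have hθab : θ ∈ Ioo a b := ⟨lt_trans (happ 0) (hpθ 0), lt_of_lt_of_le (hθq 0) (hqqb 0)⟩
  have hθcont : ContinuousAt g θ := by
    by_contra hc
    obtain ⟨k, hk⟩ := hDran hc
    exact havoid k (hk ▸ ⟨(hpθ (k+1)).le, (hθq (k+1)).le⟩)
  -- the frequently-large quotients at θ
  have hq1b : qq 1 < b := lt_of_lt_of_le (hqsucc 0) (le_of_eq rfl) |>.trans_le (hqqb 0)
  have hfreq : ∃ᶠ s in 𝓝[>] (0:ℝ), θ + s < b ∧ (1/2) * s ≤ g (θ + s) - g θ := by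
    have hsq : ∀ k : ℕ, 0 < 2 * (qq (k+1) - θ) := fun k => by linarith [hθq (k+1)]
    have hsle : ∀ k : ℕ, 2 * (qq (k+1) - θ) ≤ 2 * (1/2:ℝ)^k := by
      intro k
      have := hlen k
      have := hpθ (k+1)
      linarith
    have htend : Tendsto (fun k : ℕ => 2 * (qq (k+1) - θ)) atTop (𝓝[>] (0:ℝ)) := by
      apply tendsto_nhdsWithin_of_tendsto_nhds_of_eventually_within
      · have h2 : Tendsto (fun k : ℕ => 2 * (1/2:ℝ)^k) atTop (𝓝 (2 * 0)) :=
          (tendsto_pow_atTop_nhds_zero_of_lt_one (by norm_num) (by norm_num)).const_mul 2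
        rw [mul_zero] at h2
        exact squeeze_zero (fun k => (hsq k).le) hsle h2
      · exact Filter.Eventually.of_forall (fun k => mem_Ioi.2 (hsq k))
    apply htend.frequently
    apply Filter.Eventually.frequently
    have hev1 : ∀ᶠ k : ℕ in atTop, (1/2:ℝ)^k < b - qq 1 := by
      have := tendsto_pow_atTop_nhds_zero_of_lt_one (le_of_lt one_half_pos) (by norm_num : (1/2:ℝ) < 1)
      exact this.eventually (eventually_lt_nhds (by linarith))
    filter_upwards [hev1] with k hk
    constructor
    · have h2 : qq (k+1) ≤ qq 1 := hqanti.antitone (Nat.one_le_iff_ne_zero.2 (Nat.succ_ne_zero k))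
      have h3 := hlen k
      have h4 := hpθ (k+1)
      have h5 := hθq (k+1)
      -- θ + 2(qq(k+1) - θ) = qq(k+1) + (qq(k+1) - θ) ≤ qq 1 + (1/2)^k < b
      nlinarith
    · have h5 := hθq (k+1)
      have hgub : g θ ≤ Function.leftLim g (qq (k+1)) := hm.le_leftLim h5
      have hglb : Function.rightLim g (qq (k+1)) ≤ g (θ + 2 * (qq (k+1) - θ)) :=
        hm.rightLim_le (by linarith)
      have h6 := hjump k
      have h7 := hpθ (k+1)
      linarith
  exact (hfreq.and_eventually (H θ hθab (hθcont.continuousWithinAt) (1/2) one_half_pos)).exists.elim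
    fun s ⟨⟨h1, h2⟩, h3⟩ => absurd (h3 h1) (not_lt.2 h2)


/-- Main comparison: a continuous function with Dini derivative `≤ f ∘ u` lies below the
solution of `w' = f (w) + ε` with `w 0 = 0`. -/
lemma comp_main {f u w : ℝ → ℝ} {τ ε K : ℝ} (hτ : 0 < τ) (hε : 0 < ε)
    (hf : Continuous f) (hf0 : ∀ x, 0 ≤ f x) (hK : ∀ x, f x ≤ K)
    (hu : ContinuousOn u (Set.Icc 0 τ)) (hu0 : u 0 = 0)
    (hD : ∀ t ∈ Set.Ioo (0:ℝ) τ, diniLow u t ≤ f (u t))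
    (hw : Continuous w) (hwd : ∀ s, HasDerivAt w (f (w s) + ε) s)
    (hGw : ∀ x, Gint f ε (w x) = x) (hwG : ∀ x, w (Gint f ε x) = x) :
    ∀ t ∈ Set.Icc 0 τ, u t ≤ w t := by
  have hgsm := gsm hf hf0 hε
  have hgd := gderiv hf hf0 hε
  have hGc : Continuous (Gint f ε) := by
    rw [continuous_iff_continuousAt]; exact fun x => (hgd x).continuousAt
  have hK0 : (0:ℝ) ≤ K := le_trans (hf0 0) (hK 0)
  have hKε : (0:ℝ) < K + ε := by linarith
  have hwmono : Monotone w := by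
    intro x y hxy
    by_contra hcontra
    push_neg at hcontra
    have := hgsm hcontra
    rw [hGw, hGw] at this
    linarith
  set ψ : ℝ → ℝ := fun t => Gint f ε (u t) - t with hψdef
  have hψc : ContinuousOn ψ (Set.Icc 0 τ) :=
    ((hGc.comp_continuousOn hu).sub continuousOn_id)
  have hψ0 : ψ 0 = 0 := by simp [hψdef, hu0, gzero]
  suffices hψle : ∀ t ∈ Set.Icc 0 τ, ψ t ≤ 0 by
    intro t ht
    have h1 : Gint f ε (u t) ≤ t := by
      have := hψle t ht
      simp only [hψdef] at this
      linarith
    calc u t = w (Gint f ε (u t)) := (hwG (u t)).symm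
      _ ≤ w t := hwmono h1
  by_contra hcon
  push_neg at hcon
  obtain ⟨b', hb', hψb'⟩ := hcon
  have hb'0 : 0 < b' := by
    rcases eq_or_lt_of_le hb'.1 with h | h
    · exfalso
      rw [← h, hψ0] at hψb'
      exact lt_irrefl _ hψb'
    · exact h
  set Θ := ψ b' with hΘdef
  have hb'sub : Set.Icc 0 b' ⊆ Set.Icc 0 τ := Set.Icc_subset_Icc le_rfl hb'.2
  -- the last-contact function
  set S : ℝ → Set ℝ := fun θ => {t ∈ Set.Icc 0 b' | ψ t ≤ θ} with hSdef
  have hSclosed : ∀ θ, IsClosed (S θ) := by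
    intro θ
    have : S θ = Set.Icc 0 b' ∩ ψ ⁻¹' (Set.Iic θ) := by
      ext t; simp [hSdef]
    rw [this]
    exact ContinuousOn.preimage_isClosed_of_isClosed (hψc.mono hb'sub) isClosed_Icc isClosed_Iic
  have hSne : ∀ θ, 0 ≤ θ → (S θ).Nonempty := by
    intro θ hθ
    exact ⟨0, ⟨⟨le_rfl, hb'0.le⟩, by rw [hψ0]; exact hθ⟩⟩
  have hSbdd : ∀ θ, BddAbove (S θ) := fun θ => ⟨b', fun t ht => ht.1.2⟩
  set g : ℝ → ℝ := fun θ => sSup (S θ) with hgdef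
  have hgS : ∀ θ, 0 ≤ θ → g θ ∈ S θ := fun θ hθ =>
    (hSclosed θ).csSup_mem (hSne θ hθ) (hSbdd θ)
  have hgt : ∀ θ t, g θ < t → t ∈ Set.Icc 0 b' → θ < ψ t := by
    intro θ t hgtt ht
    by_contra hc
    push_neg at hc
    have hmem : t ∈ S θ := ⟨ht, hc⟩
    have h2 : t ≤ g θ := le_csSup (hSbdd θ) hmem
    linarith
  have hgmem : ∀ θ ∈ Set.Ioo (0:ℝ) Θ, g θ ∈ Set.Icc 0 b' := fun θ hθ => (hgS θ hθ.1.le).1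
  have hglt : ∀ θ ∈ Set.Ioo (0:ℝ) Θ, g θ < b' := by
    intro θ hθ
    rcases eq_or_lt_of_le (hgmem θ hθ).2 with h | h
    · exfalso
      have := (hgS θ hθ.1.le).2
      rw [h] at this
      rw [← hΘdef] at this
      linarith [hθ.2]
    · exact h
  have hψg : ∀ θ ∈ Set.Ioo (0:ℝ) Θ, ψ (g θ) = θ := by
    intro θ hθ
    have h1 : ψ (g θ) ≤ θ := (hgS θ hθ.1.le).2
    have h2 : θ ≤ ψ (g θ) := by
      have hlt := hglt θ hθ
      have hne : (𝓝[Set.Ioc (g θ) b'] (g θ)).NeBot := by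
        rw [← mem_closure_iff_nhdsWithin_neBot, closure_Ioc hlt.ne]
        exact ⟨le_rfl, hlt.le⟩
      have hT : Tendsto ψ (𝓝[Set.Ioc (g θ) b'] (g θ)) (𝓝 (ψ (g θ))) := by
        apply ContinuousWithinAt.mono (hψc.continuousWithinAt (hb'sub (hgmem θ hθ)))
        intro t ht
        exact hb'sub ⟨le_trans (hgmem θ hθ).1 ht.1.le, ht.2⟩
      apply ge_of_tendsto hT
      apply eventually_nhdsWithin_of_forall
      intro t ht
      exact (hgt θ t ht.1 ⟨le_trans (hgmem θ hθ).1 ht.1.le, ht.2⟩).le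
    linarith
  have hgpos : ∀ θ ∈ Set.Ioo (0:ℝ) Θ, 0 < g θ := by
    intro θ hθ
    rcases eq_or_lt_of_le (hgmem θ hθ).1 with h | h
    · exfalso
      have := hψg θ hθ
      rw [← h, hψ0] at this
      linarith [hθ.1]
    · exact h
  have hgmono : Monotone g := by
    intro θ₁ θ₂ h12
    have hsub : S θ₁ ⊆ S θ₂ := fun t ht => ⟨ht.1, le_trans ht.2 h12⟩
    rcases Set.eq_empty_or_nonempty (S θ₁) with he | hne
    · simp only [hgdef, he, Real.sSup_empty]
      rcases Set.eq_empty_or_nonempty (S θ₂) with he2 | hne2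
      · simp [he2, Real.sSup_empty]
      · obtain ⟨t, ht⟩ := hne2
        exact le_trans ht.1.1 (le_csSup (hSbdd θ₂) ht)
    · exact csSup_le_csSup (hSbdd θ₂) hne hsub
  have hgsmon : StrictMonoOn g (Set.Ioo 0 Θ) := by
    intro θ₁ h₁ θ₂ h₂ h12
    rcases eq_or_lt_of_le (hgmono h12.le) with h | h
    · exfalso
      have e1 := hψg θ₁ h₁
      have e2 := hψg θ₂ h₂
      rw [h, e2] at e1
      linarith
    · exact h
  -- apply the structural lemma
  obtain ⟨θh, hθh, hrc, c, hc, hfreq⟩ := exists_right_cont_quot hgmono hψb' hgsmon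
  set th := g θh with hthdef
  have hthmem : th ∈ Set.Ioo (0:ℝ) τ :=
    ⟨hgpos θh hθh, lt_of_lt_of_le (hglt θh hθh) hb'.2⟩
  have hψth : ψ th = θh := hψg θh hθh
  have hGuth : Gint f ε (u th) = θh + th := by
    have : ψ th = Gint f ε (u th) - th := rfl
    rw [hψth] at this
    linarith
  -- bad case must hold at th : difference quotients tend to +∞
  have Hbad : ∀ A : ℝ, ∀ᶠ h in 𝓝[>] (0:ℝ), A ≤ (u (th + h) - u th) / h := by
    apply tendsto_atTop_of_not_cobounded
    intro hb
    -- good case: derive a contradiction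
    have hDini := hD th hthmem
    set c₀ := f (u th) with hc₀
    have hfq : ∃ᶠ h in 𝓝[>] (0:ℝ), (u (th + h) - u th) / h < c₀ + ε/2 :=
      freq_of_liminf_le hb hDini (by linarith)
    -- w side
    have hwu : w (th + θh) = u th := by
      have := hwG (u th)
      rw [hGuth] at this
      rw [add_comm]
      exact this
    have hwslope : Tendsto (fun h => (w (th + θh + h) - w (th + θh)) / h)
        (𝓝[>] (0:ℝ)) (𝓝 (c₀ + ε)) := by
      have hd := hwd (th + θh)
      rw [hwu] at hd
      have hslope := hasDerivAt_iff_tendsto_slope.1 hd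
      have hmap : Tendsto (fun h : ℝ => th + θh + h) (𝓝[>] (0:ℝ)) (𝓝[≠] (th + θh)) := by
        apply tendsto_nhdsWithin_of_tendsto_nhds_of_eventually_within
        · have : Tendsto (fun h : ℝ => th + θh + h) (𝓝 0) (𝓝 (th + θh + 0)) :=
            (continuous_const.add continuous_id).tendsto 0
          rw [add_zero] at this
          exact this.mono_left nhdsWithin_le_nhds
        · apply eventually_nhdsWithin_of_forall
          intro h hh
          simp only [Set.mem_compl_iff, Set.mem_singleton_iff]
          have : (0:ℝ) < h := hh
          intro hcontra
          nlinarith [hcontra]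
      have := hslope.comp hmap
      apply this.congr
      intro h
      simp only [Function.comp_apply, slope_def_field, add_sub_cancel_left]
    have hev1 : ∀ᶠ h in 𝓝[>] (0:ℝ), c₀ + ε/2 < (w (th + θh + h) - w (th + θh)) / h :=
      hwslope.eventually (eventually_gt_nhds (by linarith))
    have hev2 : ∀ᶠ h in 𝓝[>] (0:ℝ), h < b' - th := by
      apply eventually_nhdsWithin_of_eventually_nhds
      exact eventually_lt_nhds (by linarith [hglt θh hθh])
    obtain ⟨h, hq, hw2, hhb, hh0⟩ :=
      (hfq.and_eventually (hev1.and (hev2.and self_mem_nhdsWithin))).exists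
    have hh0' : (0:ℝ) < h := hh0
    have hu_lt : u (th + h) < w (th + θh + h) := by
      have h1 : u (th + h) - u th < (c₀ + ε/2) * h := by
        rw [div_lt_iff₀ hh0'] at hq; linarith
      have h2 : (c₀ + ε/2) * h < w (th + θh + h) - w (th + θh) :=
        (lt_div_iff₀ hh0').1 hw2
      rw [hwu] at h2
      linarith
    have hG_lt : Gint f ε (u (th + h)) < th + θh + h := by
      calc Gint f ε (u (th + h)) < Gint f ε (w (th + θh + h)) := hgsm hu_lt
        _ = th + θh + h := hGw _
    have hψlt : ψ (th + h) < θh := by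
      have heq : ψ (th + h) = Gint f ε (u (th + h)) - (th + h) := rfl
      rw [heq]; linarith
    have hgt' := hgt θh (th + h) (by linarith) ⟨by linarith [hthmem.1], by linarith⟩
    linarith
  -- frequently bounded quotients at th: contradiction with Hbad
  have hfreq2 : ∃ᶠ h in 𝓝[>] (0:ℝ), u (th + h) - u th ≤ ((K + ε) * (1 + 1/c)) * h := by
    have hθhΘ : θh < Θ := hθh.2
    have hT : Tendsto (fun s => g (θh + s) - g θh) (𝓝[>] (0:ℝ)) (𝓝[>] (0:ℝ)) := by
      apply tendsto_nhdsWithin_of_tendsto_nhds_of_eventually_within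
      · have h1 : Tendsto (fun s : ℝ => θh + s) (𝓝[>] (0:ℝ)) (𝓝[>] θh) := by
          apply tendsto_nhdsWithin_of_tendsto_nhds_of_eventually_within
          · have : Tendsto (fun s : ℝ => θh + s) (𝓝 0) (𝓝 (θh + 0)) :=
              (continuous_const.add continuous_id).tendsto 0
            rw [add_zero] at this
            exact this.mono_left nhdsWithin_le_nhds
          · apply eventually_nhdsWithin_of_forall
            intro s hs
            have : (0:ℝ) < s := hs
            exact mem_Ioi.2 (by linarith)
        have h2 : Tendsto (fun s : ℝ => g (θh + s)) (𝓝[>] (0:ℝ)) (𝓝 (g θh)) := hrc.comp h1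
        have h3 := h2.sub_const (g θh)
        rw [sub_self] at h3
        exact h3
      · have hev : ∀ᶠ s in 𝓝[>] (0:ℝ), s < Θ - θh := by
          apply eventually_nhdsWithin_of_eventually_nhds
          exact eventually_lt_nhds (by linarith)
        filter_upwards [hev, self_mem_nhdsWithin] with s hs hs0
        have hs0' : (0:ℝ) < s := hs0
        have hθ'mem : θh + s ∈ Set.Ioo (0:ℝ) Θ := ⟨by linarith [hθh.1], by linarith⟩
        exact mem_Ioi.2 (sub_pos.2 (hgsmon hθh hθ'mem (by linarith)))
    apply hT.frequently
    apply (hfreq.and_eventually self_mem_nhdsWithin).mp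
    apply Filter.Eventually.of_forall
    rintro s ⟨⟨hsΘ, hcs⟩, hs0⟩
    have hs0' : (0:ℝ) < s := hs0
    have hθ'mem : θh + s ∈ Set.Ioo (0:ℝ) Θ := ⟨by linarith [hθh.1], hsΘ⟩
    have hh0 : 0 < g (θh + s) - g θh := sub_pos.2 (hgsmon hθh hθ'mem (by linarith))
    have hth2 : th + (g (θh + s) - g θh) = g (θh + s) := by
      simp only [hthdef]; ring
    have hψ' := hψg (θh + s) hθ'mem
    have hGu' : Gint f ε (u (g (θh + s))) = (θh + s) + g (θh + s) := by
      have heq : ψ (g (θh + s)) = Gint f ε (u (g (θh + s))) - g (θh + s) := rfl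
      rw [heq] at hψ'
      linarith
    have hmono' : u th ≤ u (g (θh + s)) := by
      have hGlt : Gint f ε (u th) < Gint f ε (u (g (θh + s))) := by
        rw [hGuth, hGu']
        have := hgsmon hθh hθ'mem (by linarith)
        linarith
      exact (hgsm.lt_iff_lt.1 hGlt).le
    have hexp : (K + ε)⁻¹ * (u (g (θh + s)) - u th) ≤
        Gint f ε (u (g (θh + s))) - Gint f ε (u th) := by
      apply mul_sub_le_of_hasDerivAt hgd _ hmono'
      intro z
      have hz := hf0 z
      apply inv_anti₀ (by positivity)
      linarith [hK z]
    have hsum : Gint f ε (u (g (θh + s))) - Gint f ε (u th) = s + (g (θh + s) - g θh) := by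
      rw [hGu', hGuth]
      simp only [hthdef]
      ring
    rw [hth2]
    have hs_le : s ≤ (g (θh + s) - g θh) / c := by
      rw [le_div_iff₀ hc]
      linarith
    have hKε' : (0:ℝ) < (K + ε)⁻¹ := by positivity
    rw [hsum] at hexp
    have hdiff : u (g (θh + s)) - u th ≤ (K + ε) * (s + (g (θh + s) - g θh)) := by
      have h2 := mul_le_mul_of_nonneg_left hexp hKε.le
      rw [← mul_assoc, mul_inv_cancel₀ (ne_of_gt hKε), one_mul] at h2
      exact h2
    calc u (g (θh + s)) - u th ≤ (K + ε) * (s + (g (θh + s) - g θh)) := hdiff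
      _ ≤ (K + ε) * ((g (θh + s) - g θh)/c + (g (θh + s) - g θh)) := by
          apply mul_le_mul_of_nonneg_left _ (le_of_lt hKε)
          linarith
      _ = ((K + ε) * (1 + 1/c)) * (g (θh + s) - g θh) := by
          field_simp
          ring
  obtain ⟨h, hle, hbig, hh0⟩ :=
    (hfreq2.and_eventually ((Hbad ((K + ε) * (1 + 1/c) + 1)).and self_mem_nhdsWithin)).exists
  have hh0' : (0:ℝ) < h := hh0
  rw [le_div_iff₀ hh0'] at hbig
  nlinarith



/-- Construction of the maximal solution `V` of `V' = f (V)`, `V 0 = 0`, as decreasing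
limit of the solutions with `ε = 1/(n+1)`, together with the comparison property. -/
lemma exists_limit_sol {f : ℝ → ℝ} (hf : Continuous f) (hf0 : ∀ x, 0 ≤ f x) (hf00 : f 0 = 0)
    {K : ℝ} (hK : ∀ x, f x ≤ K) {τ : ℝ} (hτ : 0 < τ) :
    ∃ V : ℝ → ℝ, (∀ t, 0 ≤ V t) ∧ V 0 = 0 ∧ ContinuousOn V (Set.Icc 0 τ) ∧
      (∀ t ∈ Set.Ico (0:ℝ) τ, HasDerivAt V (f (V t)) t) ∧
      (∀ u : ℝ → ℝ, ContinuousOn u (Set.Icc 0 τ) → u 0 = 0 →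
        (∀ t ∈ Set.Ioo (0:ℝ) τ, diniLow u t ≤ f (u t)) →
        ∀ t ∈ Set.Icc (0:ℝ) τ, u t ≤ V t) := by
  have hK0 : (0:ℝ) ≤ K := le_trans (hf0 0) (hK 0)
  set ε : ℕ → ℝ := fun n => 1/(n+1) with hεdef
  have hε : ∀ n, 0 < ε n := fun n => by positivity
  have hε1 : ∀ n, ε n ≤ 1 := by
    intro n
    simp only [hεdef]
    rw [div_le_one (by positivity)]
    have : (0:ℝ) ≤ (n:ℝ) := Nat.cast_nonneg n
    linarith
  choose wn hw1 hw2 hw3 hw4 hw5 hw6 using fun n => exists_sol hf hf0 (hε n) hK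
  have hwnn : ∀ n t, 0 ≤ t → 0 ≤ wn n t := by
    intro n t ht
    have := (hw2 n).monotone ht
    rwa [hw3 n] at this
  -- antitone in n on nonnegative times
  have hmono : ∀ m n : ℕ, m ≤ n → ∀ t, 0 ≤ t → wn n t ≤ wn m t := by
    intro m n hmn t ht
    have hεmn : ε n ≤ ε m := by
      simp only [hεdef]
      apply one_div_le_one_div_of_le (by positivity)
      have : (m:ℝ) ≤ (n:ℝ) := Nat.cast_le.2 hmn
      linarith
    have ha : 0 ≤ wn n t := hwnn n t ht
    have h1 : Gint f (ε m) (wn n t) ≤ Gint f (ε n) (wn n t) :=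
      gmono_eps hf hf0 (hε n) hεmn ha
    rw [hw5 n] at h1
    have h2 : Gint f (ε m) (wn n t) ≤ Gint f (ε m) (wn m t) := by rw [hw5 m]; exact h1
    exact ((gsm hf hf0 (hε m)).le_iff_le).1 h2
  set V : ℝ → ℝ := fun t => ⨅ n, wn n (max t 0) with hVdef
  have hbdd : ∀ t, BddBelow (Set.range fun n => wn n (max t 0)) :=
    fun t => ⟨0, by rintro _ ⟨n, rfl⟩; exact hwnn n _ (le_max_right t 0)⟩
  have hVnn : ∀ t, 0 ≤ V t := fun t => le_ciInf (fun n => hwnn n _ (le_max_right t 0))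
  have hanti : ∀ t, Antitone (fun n => wn n (max t 0)) :=
    fun t m n hmn => hmono m n hmn _ (le_max_right t 0)
  have htendV : ∀ t, Tendsto (fun n => wn n (max t 0)) atTop (𝓝 (V t)) :=
    fun t => tendsto_atTop_ciInf (hanti t) (hbdd t)
  have hVneg : ∀ t, t ≤ 0 → V t = 0 := by
    intro t ht
    have : ∀ n, wn n (max t 0) = 0 := fun n => by rw [max_eq_right ht]; exact hw3 n
    simp only [hVdef, this]
    exact ciInf_const
  have hV0 : V 0 = 0 := hVneg 0 le_rfl
  -- integral equation for each n
  have hwint : ∀ n, ∀ t : ℝ, 0 ≤ t →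
      wn n t = ∫ s in (0:ℝ)..t, (f (wn n (max s 0)) + ε n) := by
    intro n t ht
    have hcont : Continuous fun s => f (wn n s) + ε n := (hf.comp (hw1 n)).add continuous_const
    have heq : ∫ s in (0:ℝ)..t, (f (wn n s) + ε n) = wn n t := by
      have := intervalIntegral.integral_eq_sub_of_hasDerivAt (fun s _ => hw4 n s)
        (hcont.intervalIntegrable 0 t)
      rw [hw3 n, sub_zero] at this
      exact this
    rw [← heq]
    apply intervalIntegral.integral_congr
    intro s hs
    rw [Set.uIcc_of_le ht] at hs
    show f (wn n s) + ε n = f (wn n (max s 0)) + ε n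
    rw [max_eq_left hs.1]
  -- limit integral equation
  have hVint : ∀ t, t ≤ τ → V t = ∫ s in (0:ℝ)..t, f (V s) := by
    intro t htτ
    rcases le_or_gt t 0 with ht | ht
    · rw [hVneg t ht]
      have hcg : Set.EqOn (fun s => f (V s)) (fun _ => (0:ℝ)) (Set.uIcc 0 t) := by
        intro s hs
        rw [Set.uIcc_of_ge ht] at hs
        simp only
        rw [hVneg s hs.2, hf00]
      rw [intervalIntegral.integral_congr hcg, intervalIntegral.integral_zero]
    · have ht0 : (0:ℝ) ≤ t := ht.le
      have hL : Tendsto (fun n => wn n t) atTop (𝓝 (V t)) := by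
        have := htendV t
        rwa [max_eq_left ht0] at this
      have hR : Tendsto (fun n => ∫ s in (0:ℝ)..t, (f (wn n (max s 0)) + ε n)) atTop
          (𝓝 (∫ s in (0:ℝ)..t, f (V s))) := by
        apply intervalIntegral.tendsto_integral_filter_of_dominated_convergence
          (bound := fun _ => K + 1)
        · apply Filter.Eventually.of_forall
          intro n
          exact ((hf.comp ((hw1 n).comp (continuous_id.max continuous_const))).add
            continuous_const).aestronglyMeasurable
        · apply Filter.Eventually.of_forall
          intro n
          apply Filter.Eventually.of_forall
          intro s _
          have h1 : 0 ≤ f (wn n (max s 0)) := hf0 _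
          have h2 := hK (wn n (max s 0))
          have h3 := hε n
          have h4 := hε1 n
          rw [Real.norm_eq_abs, abs_of_nonneg (by linarith)]
          linarith
        · exact intervalIntegrable_const
        · apply Filter.Eventually.of_forall
          intro s _
          have h1 : Tendsto (fun n => wn n (max s 0)) atTop (𝓝 (V s)) := htendV s
          have h2 : Tendsto (fun n => f (wn n (max s 0))) atTop (𝓝 (f (V s))) :=
            (hf.tendsto (V s)).comp h1
          have h3 : Tendsto ε atTop (𝓝 0) := tendsto_one_div_add_atTop_nhds_zero_nat
          have h4 := h2.add h3
          rw [add_zero] at h4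
          exact h4
      have hL2 : Tendsto (fun n => ∫ s in (0:ℝ)..t, (f (wn n (max s 0)) + ε n)) atTop
          (𝓝 (V t)) := hL.congr (fun n => hwint n t ht0)
      exact tendsto_nhds_unique hL2 hR
  -- measurability and integrability
  have hVmeas : Measurable V := by
    apply measurable_of_tendsto_metrizable
      (fun n => ((hw1 n).comp (continuous_id.max continuous_const)).measurable)
    exact tendsto_pi_nhds.2 htendV
  have hfVmeas : Measurable fun s => f (V s) := hf.measurable.comp hVmeas
  have hII : ∀ a b : ℝ, IntervalIntegrable (fun s => f (V s)) volume a b := by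
    intro a b
    rw [intervalIntegrable_iff]
    apply MeasureTheory.Integrable.mono'
      (integrableOn_const measure_Ioc_lt_top.ne)
      (hfVmeas.aestronglyMeasurable.restrict)
    apply Filter.Eventually.of_forall
    intro s
    rw [Real.norm_eq_abs, abs_of_nonneg (hf0 _)]
    exact hK _
  set J : ℝ → ℝ := fun t => ∫ s in (0:ℝ)..t, f (V s) with hJdef
  have hJcont : Continuous J := intervalIntegral.continuous_primitive hII 0
  have hVconOn : ContinuousOn V (Set.Icc 0 τ) := by
    apply hJcont.continuousOn.congr
    intro t ht
    exact hVint t ht.2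
  have hVder : ∀ t ∈ Set.Ico (0:ℝ) τ, HasDerivAt V (f (V t)) t := by
    intro t ht
    have hVev : V =ᶠ[𝓝 t] J := by
      filter_upwards [Iio_mem_nhds ht.2] with s hs
      exact hVint s (le_of_lt hs)
    have hVcontAt : ContinuousAt V t := hJcont.continuousAt.congr hVev.symm
    have hfVcont : ContinuousAt (fun s => f (V s)) t := hf.continuousAt.comp hVcontAt
    have hJd : HasDerivAt J (f (V t)) t :=
      intervalIntegral.integral_hasDerivAt_right (hII 0 t)
        (hfVmeas.stronglyMeasurable.stronglyMeasurableAtFilter) hfVcont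
    exact hJd.congr_of_eventuallyEq hVev
  refine ⟨V, hVnn, hV0, hVconOn, hVder, ?_⟩
  intro u hu hu0 hD t ht
  have hun : ∀ n, u t ≤ wn n t :=
    fun n => comp_main hτ (hε n) hf hf0 hK hu hu0 hD (hw1 n) (hw4 n) (hw5 n) (hw6 n) t ht
  have hle : u t ≤ ⨅ n, wn n (max t 0) := by
    apply le_ciInf
    intro n
    rw [max_eq_left ht.1]
    exact hun n
  exact hle


theorem stmt0 (ω u : ℝ → ℝ) (τ : ℝ) (hτ : 0 < τ)
    (hω : IsUniquenessFun ω)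
    (hu : ContinuousOn u (Set.Icc 0 τ))
    (hnn : ∀ t ∈ Set.Icc (0:ℝ) τ, 0 ≤ u t)
    (h0 : u 0 = 0)
    (hD : ∀ t ∈ Set.Ioo (0:ℝ) τ, diniLow u t ≤ ω (u t)) :
    ∀ t ∈ Set.Icc (0:ℝ) τ, u t = 0 := by
  obtain ⟨hωc, hω0, hωnn, huniq⟩ := hω
  obtain ⟨C, hC⟩ :=
    (isCompact_Icc : IsCompact (Set.Icc (0:ℝ) τ)).exists_bound_of_continuousOn hu
  have hC0 : (0:ℝ) ≤ C := le_trans (norm_nonneg _) (hC 0 ⟨le_rfl, hτ.le⟩)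
  set M := C + 1 with hMdef
  have hM1 : (1:ℝ) ≤ M := by linarith
  have huM : ∀ t ∈ Set.Icc (0:ℝ) τ, u t ≤ M := by
    intro t ht
    have := hC t ht
    rw [Real.norm_eq_abs] at this
    have h2 := le_abs_self (u t)
    linarith
  set f : ℝ → ℝ := fun x => ω (min (max x 0) M) with hfdef
  have hclip : ∀ x : ℝ, min (max x 0) M ∈ Set.Icc (0:ℝ) M := by
    intro x
    exact ⟨le_min (le_max_right x 0) (by linarith), min_le_right _ _⟩
  have hfc : Continuous f := by
    apply hωc.comp_continuous ((continuous_id.max continuous_const).min continuous_const)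
    intro x
    exact (hclip x).1
  have hfeq : ∀ x : ℝ, 0 ≤ x → x ≤ M → f x = ω x := by
    intro x h1 h2
    simp only [hfdef]
    rw [max_eq_left h1, min_eq_left h2]
  have hf0 : ∀ x, 0 ≤ f x := fun x => hωnn _ (hclip x).1
  have hf00 : f 0 = 0 := by rw [hfeq 0 le_rfl (by linarith)]; exact hω0
  obtain ⟨K, hKb⟩ :=
    (isCompact_Icc : IsCompact (Set.Icc (0:ℝ) M)).exists_bound_of_continuousOn
      (hωc.mono (fun x hx => hx.1))
  have hK : ∀ x, f x ≤ K := by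
    intro x
    have h1 := hKb _ (hclip x)
    rw [Real.norm_eq_abs] at h1
    have h2 := le_abs_self (ω (min (max x 0) M))
    simp only [hfdef]
    linarith
  obtain ⟨V, hVnn, hV0, hVcon, hVder, hVcomp⟩ := exists_limit_sol hfc hf0 hf00 hK hτ
  have huV : ∀ t ∈ Set.Icc (0:ℝ) τ, u t ≤ V t := by
    apply hVcomp u hu h0
    intro t ht
    have htI : t ∈ Set.Icc (0:ℝ) τ := ⟨ht.1.le, ht.2.le⟩
    rw [hfeq (u t) (hnn t htI) (huM t htI)]
    exact hD t ht
  have hVzero : ∀ t ∈ Set.Ico (0:ℝ) τ, V t = 0 := by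
    by_cases hS : ∃ t ∈ Set.Icc (0:ℝ) τ, M ≤ V t
    · exfalso
      set S := Set.Icc (0:ℝ) τ ∩ V ⁻¹' (Set.Ici M) with hSdef
      have hScl : IsClosed S :=
        ContinuousOn.preimage_isClosed_of_isClosed hVcon isClosed_Icc isClosed_Ici
      have hSne : S.Nonempty := by
        obtain ⟨t, ht, hMt⟩ := hS
        exact ⟨t, ht, hMt⟩
      have hSbdd : BddBelow S := ⟨0, fun t ht => ht.1.1⟩
      set T := sInf S with hTdef
      have hTS : T ∈ S := hScl.csInf_mem hSne hSbdd
      have hT0 : 0 < T := by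
        rcases eq_or_lt_of_le hTS.1.1 with h | h
        · exfalso
          have := hTS.2
          rw [← h] at this
          rw [Set.mem_preimage, hV0] at this
          have : M ≤ 0 := this
          linarith
        · exact h
      have hVltM : ∀ t, 0 ≤ t → t < T → V t < M := by
        intro t h1 h2
        by_contra hc
        push_neg at hc
        have htS : t ∈ S := ⟨⟨h1, le_trans h2.le hTS.1.2⟩, hc⟩
        have := csInf_le hSbdd htS
        rw [← hTdef] at this
        linarith
      have hder : ∀ t ∈ Set.Ico (0:ℝ) T, HasDerivAt V (ω (V t)) t := by
        intro t ht
        have h2 : V t < M := hVltM t ht.1 ht.2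
        have h3 := hVder t ⟨ht.1, lt_of_lt_of_le ht.2 hTS.1.2⟩
        rwa [hfeq (V t) (hVnn t) h2.le] at h3
      have hz := huniq T V hT0 (fun t _ => hVnn t) hV0 hder
      -- continuity contradiction at T
      have hne : (𝓝[Set.Ioo 0 T] T).NeBot := by
        rw [← mem_closure_iff_nhdsWithin_neBot, closure_Ioo hT0.ne]
        exact ⟨hT0.le, le_rfl⟩
      have hTlim : Tendsto V (𝓝[Set.Ioo 0 T] T) (𝓝 (V T)) := by
        apply ContinuousWithinAt.mono (hVcon T hTS.1)
        intro s hs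
        exact ⟨hs.1.le, le_trans hs.2.le hTS.1.2⟩
      have hzero : Tendsto V (𝓝[Set.Ioo 0 T] T) (𝓝 0) := by
        apply Tendsto.congr' _ tendsto_const_nhds
        apply eventually_nhdsWithin_of_forall
        intro s hs
        exact (hz s ⟨hs.1.le, hs.2⟩).symm
      have hVT : V T = 0 := tendsto_nhds_unique hTlim hzero
      have := hTS.2
      rw [Set.mem_preimage, hVT] at this
      have : M ≤ 0 := this
      linarith
    · push_neg at hS
      apply huniq τ V hτ (fun t _ => hVnn t) hV0
      intro t ht
      have h2 : V t < M := hS t ⟨ht.1, ht.2.le⟩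
      have h3 := hVder t ht
      rwa [hfeq (V t) (hVnn t) h2.le] at h3
  have hu0' : ∀ s ∈ Set.Ico (0:ℝ) τ, u s = 0 := by
    intro s hs
    have h1 := huV s ⟨hs.1, hs.2.le⟩
    have h2 := hVzero s hs
    have h3 := hnn s ⟨hs.1, hs.2.le⟩
    rw [h2] at h1
    linarith
  intro t ht
  rcases eq_or_lt_of_le ht.2 with heq | hlt
  · subst heq
    have hne : (𝓝[Set.Ioo 0 t] t).NeBot := by
      rw [← mem_closure_iff_nhdsWithin_neBot, closure_Ioo]
      · exact ⟨(lt_of_lt_of_le hτ le_rfl).le, le_rfl⟩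
      · exact (lt_of_lt_of_le hτ le_rfl).ne
    have hTlim : Tendsto u (𝓝[Set.Ioo 0 t] t) (𝓝 (u t)) := by
      apply ContinuousWithinAt.mono (hu t ht)
      intro s hs
      exact ⟨hs.1.le, hs.2.le⟩
    have hzero : Tendsto u (𝓝[Set.Ioo 0 t] t) (𝓝 0) := by
      apply Tendsto.congr' _ tendsto_const_nhds
      apply eventually_nhdsWithin_of_forall
      intro s hs
      exact (hu0' s ⟨hs.1.le, hs.2⟩).symm
    exact tendsto_nhds_unique hTlim hzero
  · exact hu0' t ⟨ht.1, hlt⟩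
end

section
/- Let ω: [0,∞) → [0,∞) be continuous, τ > 0, and let x: [0,τ] → [0,∞) be the maximal solution of x' = ω(x) on [0,τ]. If u: [0,τ] → [0,∞) is continuous, absolutely continuous on every interval [δ,τ] with 0 < δ < τ, u(0) ≤ x(0), and u'(t) ≤ ω(u(t)) for almost every t ∈ (0,τ], then u(t) ≤ x(t) for all t ∈ [0,τ]. -/
open MeasureTheory intervalIntegral

open Set Filter Topology

lemma exists_global_sol (F : ℝ → ℝ) (hF : Continuous F) (M : ℝ)
    (hpos : ∀ y, 0 < F y) (hbdd : ∀ y, F y ≤ M) (a : ℝ) :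
    ∃ X : ℝ → ℝ, Continuous X ∧ X 0 = a ∧ ∀ t, HasDerivAt X (F (X t)) t := by
  have hM : 0 < M := lt_of_lt_of_le (hpos a) (hbdd a)
  have hFne : ∀ y, F y ≠ 0 := fun y => (hpos y).ne'
  have hFi : Continuous fun y => (F y)⁻¹ := hF.inv₀ hFne
  set G : ℝ → ℝ := fun y => ∫ z in a..y, (F z)⁻¹ with hGdef
  have hG' : ∀ y, HasDerivAt G ((F y)⁻¹) y := fun y =>
    (hFi.integral_hasStrictDerivAt a y).hasDerivAt
  have hGc : Continuous G :=
    Differentiable.continuous (fun y => (hG' y).differentiableAt)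
  have hGm : StrictMono G := by
    apply strictMono_of_deriv_pos
    intro y
    rw [(hG' y).deriv]
    exact inv_pos.2 (hpos y)
  -- lower bound `G y ≥ (y - a)/M` for `y ≥ a`
  have hlow : ∀ y, a ≤ y → (y - a) / M ≤ G y := by
    intro y hy
    have h1 : ∫ z in a..y, M⁻¹ ≤ ∫ z in a..y, (F z)⁻¹ := by
      apply intervalIntegral.integral_mono_on hy
        (intervalIntegrable_const) (hFi.intervalIntegrable _ _)
      intro z _
      exact inv_anti₀ (hpos z) (hbdd z)
    simpa [intervalIntegral.integral_const, smul_eq_mul, div_eq_mul_inv] using h1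
  have hup : ∀ y, y ≤ a → G y ≤ (y - a) / M := by
    intro y hy
    have h1 : ∫ z in y..a, M⁻¹ ≤ ∫ z in y..a, (F z)⁻¹ := by
      apply intervalIntegral.integral_mono_on hy
        (intervalIntegrable_const) (hFi.intervalIntegrable _ _)
      intro z _
      exact inv_anti₀ (hpos z) (hbdd z)
    have h2 : G y = -∫ z in y..a, (F z)⁻¹ := by
      rw [hGdef]; simp [intervalIntegral.integral_symm y a]
    rw [h2]
    have h3 : (a - y) / M ≤ ∫ z in y..a, (F z)⁻¹ := by
      simpa [intervalIntegral.integral_const, smul_eq_mul, div_eq_mul_inv] using h1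
    have h4 : (y - a) / M = -((a - y) / M) := by ring
    rw [h4]
    linarith
  have htop : Tendsto G atTop atTop := by
    apply tendsto_atTop_mono' _ _ (Tendsto.atTop_div_const hM
      (tendsto_atTop_add_const_right _ (-a) tendsto_id) : Tendsto (fun y => (y - a)/M) atTop atTop)
    · filter_upwards [eventually_ge_atTop a] with y hy using hlow y hy
  have hbot : Tendsto G atBot atBot := by
    apply tendsto_atBot_mono' _ _ (Tendsto.atBot_div_const hM
      (tendsto_atBot_add_const_right _ (-a) tendsto_id) : Tendsto (fun y => (y - a)/M) atBot atBot)
    · filter_upwards [eventually_le_atBot a] with y hy using hup y hy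
  have hsurj : Function.Surjective G := hGc.surjective htop hbot
  set e := StrictMono.orderIsoOfSurjective G hGm hsurj with hedef
  set X : ℝ → ℝ := fun t => e.symm t with hXdef
  have hXc : Continuous X := e.symm.continuous
  have hGX : ∀ t, G (X t) = t := fun t => e.apply_symm_apply t
  have hX0 : X 0 = a := by
    have : G a = 0 := intervalIntegral.integral_same
    have h1 : e a = (0:ℝ) := this
    have := e.symm_apply_apply a
    rw [h1] at this
    exact this
  refine ⟨X, hXc, hX0, fun t => ?_⟩
  have hd : HasDerivAt X (((F (X t))⁻¹)⁻¹) t := by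
    apply HasDerivAt.of_local_left_inverse (hXc.continuousAt) (hG' (X t))
      (inv_ne_zero (hFne _))
    exact Filter.Eventually.of_forall hGX
  simpa [inv_inv] using hd

lemma comparison_lem (τ : ℝ) (hτ : 0 < τ) (W : ℝ → ℝ) (hW : Continuous W)
    (ε : ℝ) (hε : 0 < ε) (w : ℝ → ℝ) (hw : ∀ t, HasDerivAt w (W (w t) + ε) t)
    (f : ℝ → ℝ) (hf : ContinuousOn f (Icc 0 τ)) (h0 : f 0 < w 0)
    (hfi : ∀ r t, 0 < r → r ≤ t → t ≤ τ → f t - f r ≤ ∫ σ in r..t, (W (f σ) + ε/2)) :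
    ∀ t ∈ Icc (0:ℝ) τ, f t < w t := by
  have hwc : Continuous w := Differentiable.continuous (fun t => (hw t).differentiableAt)
  intro t ht
  by_contra hcon
  set S := {s : ℝ | s ∈ Icc 0 τ ∧ w s ≤ f s} with hSdef
  have hSne : S.Nonempty := ⟨t, ht, not_lt.1 hcon⟩
  have hclosed : IsClosed S := by
    have hSeq : S = Icc 0 τ ∩ (fun s => f s - w s) ⁻¹' (Ici 0) := by
      ext s
      simp only [hSdef, mem_setOf_eq, mem_inter_iff, mem_preimage, mem_Ici, sub_nonneg]
    rw [hSeq]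
    exact ContinuousOn.preimage_isClosed_of_isClosed (hf.sub hwc.continuousOn)
      isClosed_Icc isClosed_Ici
  have hbdd : BddBelow S := ⟨0, fun s hs => hs.1.1⟩
  set c := sInf S with hcdef
  have hcS : c ∈ S := hclosed.csInf_mem hSne hbdd
  have hc0 : c ∈ Icc 0 τ := hcS.1
  have hcpos : 0 < c := by
    rcases lt_or_eq_of_le hc0.1 with h | h
    · exact h
    · exfalso; rw [← h] at hcS; exact absurd hcS.2 (not_le.2 h0)
  have hlt : ∀ r, 0 ≤ r → r < c → f r < w r := by
    intro r h1 h2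
    by_contra h
    push_neg at h
    have : r ∈ S := ⟨⟨h1, le_trans h2.le hc0.2⟩, h⟩
    exact absurd (csInf_le hbdd this) (not_le.2 h2)
  have heq : f c = w c := by
    refine le_antisymm ?_ hcS.2
    by_contra h
    push_neg at h
    have hd : 0 < f c - w c := by linarith
    have hfw : ContinuousWithinAt (fun s => f s - w s) (Icc 0 τ) c :=
      (hf.sub hwc.continuousOn) c hc0
    rw [Metric.continuousWithinAt_iff] at hfw
    obtain ⟨δ, hδ, hδ'⟩ := hfw _ hd
    set r := max (c - δ/2) (c/2) with hrdef
    have hr1 : 0 < r := lt_max_of_lt_right (by linarith)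
    have hrc : r < c := max_lt (by linarith) (by linarith)
    have hrI : r ∈ Icc 0 τ := ⟨hr1.le, le_trans hrc.le hc0.2⟩
    have hrd : dist r c < δ := by
      rw [Real.dist_eq, abs_of_nonpos (by linarith)]
      have : c - δ/2 ≤ r := le_max_left _ _
      linarith
    have := hδ' hrI hrd
    rw [Real.dist_eq] at this
    have : f r - w r > 0 := by
      rcases abs_lt.1 this with ⟨h1, _⟩
      linarith
    exact absurd this (not_lt.2 (le_of_lt (by linarith [hlt r hr1.le hrc])))
  -- main estimate
  have h1 : ContinuousWithinAt (fun s => W (f s)) (Icc 0 τ) c :=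
    hW.continuousAt.comp_continuousWithinAt (hf c hc0)
  have h2 : ContinuousAt (fun s => W (w s)) c :=
    hW.continuousAt.comp hwc.continuousAt
  rw [Metric.continuousWithinAt_iff] at h1
  rw [Metric.continuousAt_iff] at h2
  obtain ⟨δ₁, hδ₁, hδ₁'⟩ := h1 (ε/8) (by linarith)
  obtain ⟨δ₂, hδ₂, hδ₂'⟩ := h2 (ε/8) (by linarith)
  set δ := min δ₁ δ₂ with hδdef
  have hδpos : 0 < δ := lt_min hδ₁ hδ₂
  set r := max (c - δ/2) (c/2) with hrdef
  have hr1 : 0 < r := lt_max_of_lt_right (by linarith)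
  have hrc : r < c := max_lt (by linarith) (by linarith)
  have hrI : r ∈ Icc 0 τ := ⟨hr1.le, le_trans hrc.le hc0.2⟩
  have hclose : ∀ σ, σ ∈ Icc r c → dist σ c < δ := by
    intro σ hσ
    rw [Real.dist_eq, abs_of_nonpos (by linarith [hσ.2])]
    have : c - δ/2 ≤ r := le_max_left _ _
    linarith [hσ.1]
  have hsubset : ∀ σ, σ ∈ Icc r c → σ ∈ Icc (0:ℝ) τ :=
    fun σ hσ => ⟨le_trans hr1.le hσ.1, le_trans hσ.2 hc0.2⟩
  -- estimate for f
  have hfint : IntervalIntegrable (fun σ => W (f σ) + ε/2) volume r c := by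
    apply ContinuousOn.intervalIntegrable
    rw [uIcc_of_le hrc.le]
    exact ((hW.comp_continuousOn (hf.mono hsubset)).add continuousOn_const)
  have est1 : f c - f r ≤ (c - r) * (W (f c) + 5*ε/8) := by
    have e1 := hfi r c hr1 hrc.le hc0.2
    have e2 : ∫ σ in r..c, (W (f σ) + ε/2) ≤ ∫ σ in r..c, (W (f c) + 5*ε/8) := by
      apply intervalIntegral.integral_mono_on hrc.le hfint intervalIntegrable_const
      intro σ hσ
      have := hδ₁' (hsubset σ hσ) (lt_of_lt_of_le (hclose σ hσ) (min_le_left _ _))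
      rw [Real.dist_eq] at this
      rcases abs_lt.1 this with ⟨_, h⟩
      linarith
    rw [intervalIntegral.integral_const, smul_eq_mul] at e2
    linarith
  -- estimate for w
  have est2 : (c - r) * (W (w c) + 7*ε/8) ≤ w c - w r := by
    have e1 : ∫ σ in r..c, (W (w σ) + ε) = w c - w r := by
      apply intervalIntegral.integral_eq_sub_of_hasDerivAt
      · intro σ _; exact hw σ
      · exact ((hW.comp hwc).add continuous_const).intervalIntegrable _ _
    have e2 : ∫ σ in r..c, (W (w c) + 7*ε/8) ≤ ∫ σ in r..c, (W (w σ) + ε) := by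
      apply intervalIntegral.integral_mono_on hrc.le intervalIntegrable_const
        (((hW.comp hwc).add continuous_const).intervalIntegrable _ _)
      intro σ hσ
      have := hδ₂' (lt_of_lt_of_le (hclose σ hσ) (min_le_right _ _))
      rw [Real.dist_eq] at this
      rcases abs_lt.1 this with ⟨h, _⟩
      simp only [Pi.add_apply, Function.comp_apply]
      linarith
    rw [intervalIntegral.integral_const, smul_eq_mul] at e2
    linarith
  have hfr : f r < w r := hlt r hr1.le hrc
  have hWeq : W (f c) = W (w c) := by rw [heq]
  nlinarith [hcS.2, sub_pos.2 hrc]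

theorem stmt2 (ω : ℝ → ℝ) (τ : ℝ) (hτ : 0 < τ)
    (hωc : ContinuousOn ω (Set.Ici 0)) (hωnn : ∀ s, 0 ≤ s → 0 ≤ ω s)
    (x : ℝ → ℝ)
    (hxnn : ∀ t ∈ Set.Icc (0:ℝ) τ, 0 ≤ x t)
    (hxsol : ∀ t ∈ Set.Icc (0:ℝ) τ, HasDerivAt x (ω (x t)) t)
    -- maximality of `x`: it dominates every solution on a common interval of existence
    (hxmax : ∀ σ ∈ Set.Ioc (0:ℝ) τ, ∀ v : ℝ → ℝ,
      (∀ t ∈ Set.Icc (0:ℝ) σ, 0 ≤ v t) → v 0 ≤ x 0 →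
      (∀ t ∈ Set.Icc (0:ℝ) σ, HasDerivAt v (ω (v t)) t) →
      ∀ t ∈ Set.Icc (0:ℝ) σ, v t ≤ x t)
    (u u' : ℝ → ℝ)
    (hu : ContinuousOn u (Set.Icc 0 τ))
    (hunn : ∀ t ∈ Set.Icc (0:ℝ) τ, 0 ≤ u t)
    -- `u` is absolutely continuous on every `[δ, τ]`, `0 < δ < τ`, with a.e. derivative `u'`
    (huac : ∀ δ ∈ Set.Ioo (0:ℝ) τ,
      IntervalIntegrable u' volume δ τ ∧
      ∀ t ∈ Set.Icc δ τ, u t = u δ + ∫ s in δ..t, u' s)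
    (hu0 : u 0 ≤ x 0)
    (hud : ∀ᵐ t ∂(volume.restrict (Set.Ioc (0:ℝ) τ)), u' t ≤ ω (u t)) :
    ∀ t ∈ Set.Icc (0:ℝ) τ, u t ≤ x t := by
  have hIne : (Icc (0:ℝ) τ).Nonempty := nonempty_Icc.2 hτ.le
  have hxc : ContinuousOn x (Icc 0 τ) :=
    fun t ht => ((hxsol t ht).continuousAt).continuousWithinAt
  obtain ⟨tx, htx, hxb⟩ := isCompact_Icc.exists_isMaxOn hIne hxc
  obtain ⟨tu, htu, hub⟩ := isCompact_Icc.exists_isMaxOn hIne hu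
  set B : ℝ := max (x tx) (u tu) + 1 with hBdef
  have hxB : ∀ t ∈ Icc (0:ℝ) τ, x t ≤ B - 1 := by
    intro t ht
    have h1 : x t ≤ x tx := hxb ht
    have h2 := le_max_left (x tx) (u tu)
    simp only [hBdef]; linarith
  have huB : ∀ t ∈ Icc (0:ℝ) τ, u t ≤ B - 1 := by
    intro t ht
    have h1 : u t ≤ u tu := hub ht
    have h2 := le_max_right (x tx) (u tu)
    simp only [hBdef]; linarith
  have hB0 : (0:ℝ) ≤ B := by
    have h1 := hxnn tx htx
    have h2 := le_max_left (x tx) (u tu)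
    simp only [hBdef]; linarith
  -- clamp and truncated ω
  set cl : ℝ → ℝ := fun y => min (max y 0) B with hcldef
  have hclcont : Continuous cl := (continuous_id.max continuous_const).min continuous_const
  have hclmem : ∀ y, cl y ∈ Icc (0:ℝ) B := fun y =>
    ⟨le_min (le_max_right _ _) hB0, min_le_right _ _⟩
  have hclid : ∀ y, 0 ≤ y → y ≤ B → cl y = y := by
    intro y h1 h2; simp [hcldef, max_eq_left h1, min_eq_left h2]
  set W : ℝ → ℝ := fun y => ω (cl y) * max 0 (min 1 (B + 1 - y)) with hWdef
  have hWc : Continuous W := by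
    apply Continuous.mul
    · exact hωc.comp_continuous hclcont (fun y => (hclmem y).1)
    · exact continuous_const.max (continuous_const.min (continuous_const.sub continuous_id))
  have hWnn : ∀ y, 0 ≤ W y :=
    fun y => mul_nonneg (hωnn _ (hclmem y).1) (le_max_left _ _)
  have hWeq : ∀ y, 0 ≤ y → y ≤ B → W y = ω y := by
    intro y h1 h2
    have hr : max 0 (min 1 (B + 1 - y)) = 1 := by
      rw [min_eq_left (by linarith)]; exact max_eq_right zero_le_one
    rw [hWdef]; simp only [hclid y h1 h2, hr, mul_one]
  -- bound for W
  obtain ⟨yM, hyM, hM'⟩ := isCompact_Icc.exists_isMaxOn (nonempty_Icc.2 hB0)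
    ((hωc.comp_continuous hclcont (fun y => (hclmem y).1)).continuousOn :
      ContinuousOn (fun y => ω (cl y)) (Icc 0 B))
  set M : ℝ := ω (cl yM) + 1 with hMdef
  have hWM : ∀ y, W y ≤ M := by
    intro y
    have h1 : ω (cl y) ≤ ω (cl yM) := by
      have h0 : ω (cl (cl y)) ≤ ω (cl yM) := hM' (hclmem y)
      rwa [hclid _ (hclmem y).1 (hclmem y).2] at h0
    have h2 : max 0 (min 1 (B + 1 - y)) ≤ 1 := max_le zero_le_one (min_le_left _ _)
    have h3 : W y ≤ ω (cl y) * 1 :=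
      mul_le_mul_of_nonneg_left h2 (hωnn _ (hclmem y).1)
    rw [mul_one] at h3
    simp only [hMdef]; linarith
  have hMpos : 0 < M := by
    have := hωnn _ (hclmem yM).1; simp only [hMdef]; linarith
  -- approximating solutions
  set e : ℕ → ℝ := fun n => (1/2)^n with hedef
  have hepos : ∀ n, 0 < e n := fun n => pow_pos (by norm_num) n
  have hele : ∀ n, e n ≤ 1 := fun n => pow_le_one₀ (by norm_num) (by norm_num)
  have hesucc : ∀ n, e (n+1) = e n / 2 := by
    intro n; simp only [hedef, pow_succ]; ring
  have key : ∀ n : ℕ, ∃ X : ℝ → ℝ, Continuous X ∧ X 0 = x 0 + e n ∧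
      ∀ t, HasDerivAt X (W (X t) + e n) t := by
    intro n
    exact exists_global_sol (fun y => W y + e n) (hWc.add continuous_const) (M + 1)
      (fun y => add_pos_of_nonneg_of_pos (hWnn y) (hepos n))
      (fun y => add_le_add (hWM y) (hele n)) (x 0 + e n)
  choose X hXc hX0 hXd using key
  -- integral identity for X n
  have hXint : ∀ n, Continuous fun σ => W (X n σ) + e n :=
    fun n => (hWc.comp (hXc n)).add continuous_const
  have hXeq : ∀ n (r t : ℝ), (∫ σ in r..t, (W (X n σ) + e n)) = X n t - X n r := by
    intro n r t
    exact intervalIntegral.integral_eq_sub_of_hasDerivAt (fun σ _ => hXd n σ)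
      ((hXint n).intervalIntegrable _ _)
  -- integral inequality for u
  have hucont : ∀ r t, 0 ≤ r → t ≤ τ → r ≤ t → ContinuousOn (fun σ => W (u σ)) (Icc r t) := by
    intro r t h0 ht hrt
    have hsub : Icc r t ⊆ Icc 0 τ := Icc_subset_Icc h0 ht
    exact hWc.comp_continuousOn (hu.mono hsub)
  have huint : ∀ r t, 0 < r → r ≤ t → t ≤ τ → u t - u r ≤ ∫ σ in r..t, W (u σ) := by
    intro r t hr hrt htτ
    rcases eq_or_lt_of_le (hrt.trans htτ) with hrτ | hrτ
    · -- r = τ, hence t = τ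
      have hrt' : r = t := le_antisymm hrt (htτ.trans hrτ.ge)
      subst hrt'
      simp
    · obtain ⟨hint, heq⟩ := huac r ⟨hr, hrτ⟩
      have h1 : u t = u r + ∫ s in r..t, u' s := heq t ⟨hrt, htτ⟩
      have hsub : Icc r t ⊆ Icc 0 τ := Icc_subset_Icc hr.le htτ
      have hint1 : IntervalIntegrable u' volume r t :=
        hint.mono_set (by rw [uIcc_of_le hrt, uIcc_of_le hrτ.le]; exact Icc_subset_Icc le_rfl htτ)
      have hint2 : IntervalIntegrable (fun σ => W (u σ)) volume r t := by
        apply ContinuousOn.intervalIntegrable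
        rw [uIcc_of_le hrt]
        exact hucont r t hr.le htτ hrt
      have hae : u' ≤ᵐ[volume.restrict (Icc r t)] fun σ => W (u σ) := by
        have h2 : volume.restrict (Icc r t) = volume.restrict (Ioc r t) :=
          (Measure.restrict_congr_set Ioc_ae_eq_Icc).symm
        rw [h2]
        have h3 : ∀ᵐ σ ∂(volume.restrict (Ioc r t)), u' σ ≤ ω (u σ) :=
          ae_restrict_of_ae_restrict_of_subset (Ioc_subset_Ioc hr.le htτ) hud
        have h4 : ∀ᵐ σ ∂(volume.restrict (Ioc r t)), σ ∈ Ioc r t :=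
          (ae_restrict_iff' measurableSet_Ioc).2 (Eventually.of_forall (fun σ h => h))
        filter_upwards [h3, h4] with σ hσ1 hσ2
        have hσI : σ ∈ Icc (0:ℝ) τ := ⟨hr.le.trans hσ2.1.le, hσ2.2.trans htτ⟩
        rw [hWeq _ (hunn σ hσI) ((huB σ hσI).trans (by linarith))]
        exact hσ1
      have h5 : (∫ s in r..t, u' s) ≤ ∫ σ in r..t, W (u σ) :=
        intervalIntegral.integral_mono_ae_restrict hrt hint1 hint2 hae
      linarith
  -- comparison : u < X n on [0, τ]
  have hcomp_u : ∀ n, ∀ t ∈ Icc (0:ℝ) τ, u t < X n t := by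
    intro n
    apply comparison_lem τ hτ W hWc (e n) (hepos n) (X n) (hXd n) u hu
    · rw [hX0]; linarith [hepos n]
    · intro r t hr hrt htτ
      have h1 := huint r t hr hrt htτ
      have h2 : (∫ σ in r..t, W (u σ)) ≤ ∫ σ in r..t, (W (u σ) + e n / 2) := by
        apply intervalIntegral.integral_mono_on hrt
          (ContinuousOn.intervalIntegrable
            (by rw [uIcc_of_le hrt]; exact hucont r t hr.le htτ hrt))
          (ContinuousOn.intervalIntegrable
            (by rw [uIcc_of_le hrt]; exact (hucont r t hr.le htτ hrt).add continuousOn_const))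
        intro σ _
        linarith [hepos n]
      linarith
  -- comparison : X (n+1) < X n on [0, τ]
  have hcomp_X : ∀ n, ∀ t ∈ Icc (0:ℝ) τ, X (n+1) t < X n t := by
    intro n
    apply comparison_lem τ hτ W hWc (e n) (hepos n) (X n) (hXd n) (X (n+1))
      (hXc (n+1)).continuousOn
    · rw [hX0, hX0]
      have : e (n+1) < e n := by rw [hesucc n]; linarith [hepos n]
      linarith
    · intro r t _ hrt _
      rw [← hesucc n]
      exact le_of_eq (by rw [hXeq (n+1) r t])
  -- the limit function q
  set q : ℝ → ℝ := fun t => ⨅ n, X n t with hqdef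
  have hbddb : ∀ t ∈ Icc (0:ℝ) τ, BddBelow (range fun n => X n t) := by
    intro t ht
    exact ⟨u t, by rintro y ⟨n, rfl⟩; exact (hcomp_u n t ht).le⟩
  have hanti : ∀ t ∈ Icc (0:ℝ) τ, Antitone fun n => X n t := by
    intro t ht
    exact antitone_nat_of_succ_le (fun n => (hcomp_X n t ht).le)
  have hqlim : ∀ t ∈ Icc (0:ℝ) τ, Tendsto (fun n => X n t) atTop (𝓝 (q t)) :=
    fun t ht => tendsto_atTop_ciInf (hanti t ht) (hbddb t ht)
  have huq : ∀ t ∈ Icc (0:ℝ) τ, u t ≤ q t :=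
    fun t ht => le_ciInf (fun n => (hcomp_u n t ht).le)
  have hqnn : ∀ t ∈ Icc (0:ℝ) τ, 0 ≤ q t :=
    fun t ht => (hunn t ht).trans (huq t ht)
  have hqm : Measurable q := Measurable.iInf (fun n => (hXc n).measurable)
  have het : Tendsto e atTop (𝓝 0) := by
    rw [hedef]
    exact tendsto_pow_atTop_nhds_zero_of_lt_one (by norm_num) (by norm_num)
  -- integral equation for q
  have hqeq : ∀ t ∈ Icc (0:ℝ) τ, q t = x 0 + ∫ σ in (0:ℝ)..t, W (q σ) := by
    intro t ht
    have hXt : ∀ n, X n t = x 0 + e n + (∫ σ in (0:ℝ)..t, W (X n σ)) + e n * t := by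
      intro n
      have h1 := hXeq n 0 t
      have h2 : (∫ σ in (0:ℝ)..t, (W (X n σ) + e n))
          = (∫ σ in (0:ℝ)..t, W (X n σ)) + (∫ σ in (0:ℝ)..t, e n) := by
        apply intervalIntegral.integral_add ((hWc.comp (hXc n)).intervalIntegrable _ _)
          (intervalIntegrable_const)
      rw [h2] at h1
      rw [intervalIntegral.integral_const, smul_eq_mul, sub_zero] at h1
      rw [hX0] at h1
      linarith [h1]
    have hDCT : Tendsto (fun n => ∫ σ in (0:ℝ)..t, W (X n σ)) atTop
        (𝓝 (∫ σ in (0:ℝ)..t, W (q σ))) := by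
      apply intervalIntegral.tendsto_integral_filter_of_dominated_convergence (fun _ => M)
      · exact Eventually.of_forall (fun n => ((hWc.comp (hXc n)).aestronglyMeasurable))
      · refine Eventually.of_forall (fun n => Eventually.of_forall (fun σ _ => ?_))
        show ‖W (X n σ)‖ ≤ M
        rw [Real.norm_of_nonneg (hWnn _)]
        exact hWM _
      · exact intervalIntegrable_const
      · refine Eventually.of_forall (fun σ hσ => ?_)
        have hσI : σ ∈ Icc (0:ℝ) τ := by
          rw [uIoc_of_le ht.1] at hσ
          exact ⟨hσ.1.le, hσ.2.trans ht.2⟩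
        exact (hWc.continuousAt.tendsto.comp (hqlim σ hσI))
    have hlhs : Tendsto (fun n => X n t) atTop (𝓝 (q t)) := hqlim t ht
    have hrhs : Tendsto (fun n => X n t) atTop
        (𝓝 (x 0 + 0 + (∫ σ in (0:ℝ)..t, W (q σ)) + 0 * t)) := by
      simp only [hXt]
      exact (((tendsto_const_nhds.add het).add hDCT).add (het.mul tendsto_const_nhds))
    have := tendsto_nhds_unique hlhs hrhs
    rw [this]; ring
  have hq0 : q 0 = x 0 := by
    have := hqeq 0 (left_mem_Icc.2 hτ.le)
    simpa using this
  -- q is Lipschitz on [0, τ], hence continuous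
  have hWq_int : ∀ r t : ℝ, IntervalIntegrable (fun σ => W (q σ)) volume r t := by
    intro r t
    rw [intervalIntegrable_iff]
    apply Measure.integrableOn_of_bounded (M := M) (measure_Ioc_lt_top).ne
      ((hWc.measurable.comp hqm).aestronglyMeasurable)
    refine Eventually.of_forall (fun σ => ?_)
    show ‖W (q σ)‖ ≤ M
    rw [Real.norm_of_nonneg (hWnn _)]
    exact hWM _
  have hqsub : ∀ r t, r ∈ Icc (0:ℝ) τ → t ∈ Icc (0:ℝ) τ →
      q t - q r = ∫ σ in r..t, W (q σ) := by
    intro r t hr ht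
    rw [hqeq t ht, hqeq r hr]
    have h3 := intervalIntegral.integral_add_adjacent_intervals
      (a := (0:ℝ)) (b := r) (c := t) (hWq_int 0 r) (hWq_int r t)
    linarith [h3]
  have hqcont : ContinuousOn q (Icc 0 τ) := by
    have hlip : LipschitzOnWith (Real.toNNReal M) q (Icc 0 τ) := by
      apply LipschitzOnWith.of_dist_le_mul
      intro s hs s' hs'
      rw [Real.dist_eq, Real.dist_eq, hqsub s' s hs' hs]
      have hbnd : ∀ σ ∈ Set.uIoc s' s, ‖W (q σ)‖ ≤ M := by
        intro σ _
        rw [Real.norm_of_nonneg (hWnn _)]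
        exact hWM _
      have hb := intervalIntegral.norm_integral_le_of_norm_le_const
        (C := M) (f := fun σ => W (q σ)) (a := s') (b := s) hbnd
      rw [Real.norm_eq_abs] at hb
      calc |∫ σ in s'..s, W (q σ)| ≤ M * |s - s'| := by simpa using hb
        _ ≤ Real.toNNReal M * |s - s'| := by
            apply mul_le_mul_of_nonneg_right _ (abs_nonneg _)
            exact le_of_eq (Real.coe_toNNReal M hMpos.le).symm
    exact hlip.continuousOn
  -- the candidate solution v (globally defined)
  set cl2 : ℝ → ℝ := fun s => min (max s 0) τ with hcl2def
  have hcl2c : Continuous cl2 := (continuous_id.max continuous_const).min continuous_const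
  have hcl2mem : ∀ s, cl2 s ∈ Icc (0:ℝ) τ := fun s =>
    ⟨le_min (le_max_right _ _) hτ.le, min_le_right _ _⟩
  have hcl2id : ∀ s, 0 ≤ s → s ≤ τ → cl2 s = s := by
    intro s h1 h2; simp [hcl2def, max_eq_left h1, min_eq_left h2]
  set g : ℝ → ℝ := fun s => W (q (cl2 s)) with hgdef
  have hgc : Continuous g := hWc.comp (hqcont.comp_continuous hcl2c hcl2mem)
  set v : ℝ → ℝ := fun t => x 0 + ∫ σ in (0:ℝ)..t, g σ with hvdef
  have hvd : ∀ t, HasDerivAt v (g t) t := by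
    intro t
    exact ((hgc.integral_hasStrictDerivAt 0 t).hasDerivAt).const_add (x 0)
  have hvq : ∀ t ∈ Icc (0:ℝ) τ, v t = q t := by
    intro t ht
    rw [hvdef]
    simp only
    rw [hqeq t ht]
    congr 1
    apply intervalIntegral.integral_congr
    intro σ hσ
    rw [uIcc_of_le ht.1] at hσ
    simp only [hgdef]
    rw [hcl2id σ hσ.1 (hσ.2.trans ht.2)]
  have hv0 : v 0 = x 0 := by rw [hvdef]; simp
  -- applying maximality
  have happly : ∀ σ', σ' ∈ Ioc (0:ℝ) τ → (∀ s ∈ Icc (0:ℝ) σ', q s ≤ B) →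
      ∀ s ∈ Icc (0:ℝ) σ', q s ≤ x s := by
    intro σ' hσ' hqB
    have hsub : ∀ s, s ∈ Icc (0:ℝ) σ' → s ∈ Icc (0:ℝ) τ :=
      fun s hs => ⟨hs.1, hs.2.trans hσ'.2⟩
    have h := hxmax σ' hσ' v
      (fun s hs => by rw [hvq s (hsub s hs)]; exact hqnn s (hsub s hs))
      (le_of_eq hv0)
      (fun s hs => by
        have hd := hvd s
        have hgs : g s = ω (v s) := by
          rw [hgdef]
          simp only
          rw [hcl2id s hs.1 (hs.2.trans hσ'.2), hvq s (hsub s hs)]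
          exact hWeq _ (hqnn s (hsub s hs)) (hqB s hs)
        rwa [hgs] at hd)
    intro s hs
    rw [← hvq s (hsub s hs)]
    exact h s hs
  -- q stays below B
  have hqB : ∀ s ∈ Icc (0:ℝ) τ, q s < B := by
    by_contra hc
    push_neg at hc
    obtain ⟨s₀, hs₀, hs₀B⟩ := hc
    set S := {s : ℝ | s ∈ Icc (0:ℝ) τ ∧ B ≤ q s} with hSdef
    have hSne : S.Nonempty := ⟨s₀, hs₀, hs₀B⟩
    have hclosed : IsClosed S := by
      have hSeq : S = Icc 0 τ ∩ q ⁻¹' (Ici B) := by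
        ext s; simp [hSdef, mem_setOf_eq]
      rw [hSeq]
      exact ContinuousOn.preimage_isClosed_of_isClosed hqcont isClosed_Icc isClosed_Ici
    have hbddS : BddBelow S := ⟨0, fun s hs => hs.1.1⟩
    set σ := sInf S with hσdef
    have hσS : σ ∈ S := hclosed.csInf_mem hSne hbddS
    have hσI : σ ∈ Icc (0:ℝ) τ := hσS.1
    have hσpos : 0 < σ := by
      rcases lt_or_eq_of_le hσI.1 with h | h
      · exact h
      · exfalso
        rw [← h] at hσS
        have := hσS.2
        rw [hq0] at this
        have := hxB 0 (left_mem_Icc.2 hτ.le)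
        linarith
    have hltσ : ∀ s, 0 ≤ s → s < σ → q s < B := by
      intro s h1 h2
      by_contra h
      push_neg at h
      have : s ∈ S := ⟨⟨h1, h2.le.trans hσI.2⟩, h⟩
      exact absurd (csInf_le hbddS this) (not_le.2 h2)
    have hσB : q σ = B := by
      refine le_antisymm ?_ hσS.2
      by_contra h
      push_neg at h
      have hd : 0 < q σ - B := by linarith
      have hfw : ContinuousWithinAt q (Icc 0 τ) σ := hqcont σ hσI
      rw [Metric.continuousWithinAt_iff] at hfw
      obtain ⟨δ, hδ, hδ'⟩ := hfw _ hd
      set r := max (σ - δ/2) (σ/2) with hrdef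
      have hr1 : 0 < r := lt_max_of_lt_right (by linarith)
      have hrσ : r < σ := max_lt (by linarith) (by linarith)
      have hrI : r ∈ Icc (0:ℝ) τ := ⟨hr1.le, hrσ.le.trans hσI.2⟩
      have hrd : dist r σ < δ := by
        rw [Real.dist_eq, abs_of_nonpos (by linarith)]
        have : σ - δ/2 ≤ r := le_max_left _ _
        linarith
      have h6 := hδ' hrI hrd
      rw [Real.dist_eq] at h6
      rcases abs_lt.1 h6 with ⟨h7, _⟩
      have : B < q r := by linarith
      exact absurd this (not_lt.2 (hltσ r hr1.le hrσ).le)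
    have h8 : ∀ s ∈ Icc (0:ℝ) σ, q s ≤ B := by
      intro s hs
      rcases lt_or_eq_of_le hs.2 with h | h
      · exact (hltσ s hs.1 h).le
      · rw [h, hσB]
    have h9 := happly σ ⟨hσpos, hσI.2⟩ h8 σ (right_mem_Icc.2 hσpos.le)
    have := hxB σ hσI
    rw [hσB] at h9
    linarith
  -- conclusion
  have hfinal := happly τ ⟨hτ, le_refl τ⟩ (fun s hs => (hqB s hs).le)
  intro t ht
  exact (huq t ht).trans (hfinal t ht)
end

section
/- Let β: [0,∞) → [0,∞) be continuous and nondecreasing with liminf_{x→0⁺} x/β(x) > 0. Then β is a slow function: there exist ε > 0, M > 0 and τ > 0 such that for every a ∈ [0,ε] and every continuous u: [0,τ] → [0,∞) satisfying u(t) ≤ a + ∫₀ᵗ β(u(s)) ds for all t ∈ [0,τ], one has u(t) ≤ aM for all t ∈ [0,τ]. -/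
open MeasureTheory intervalIntegral

/-- A continuous nondecreasing `β : [0,∞) → [0,∞)` is slow if there exist `ε, M, τ > 0` such
that any continuous nonnegative `u` on `[0,τ]` satisfying the integral inequality
`u t ≤ a + ∫₀ᵗ β (u s) ds` with `a ∈ [0,ε]` obeys `u t ≤ a * M` on `[0,τ]`. -/
def IsSlow (β : ℝ → ℝ) : Prop :=
  ContinuousOn β (Set.Ici 0) ∧ MonotoneOn β (Set.Ici 0) ∧ (∀ x, 0 ≤ x → 0 ≤ β x) ∧
  ∃ ε > (0:ℝ), ∃ M > (0:ℝ), ∃ τ > (0:ℝ), ∀ a ∈ Set.Icc (0:ℝ) ε, ∀ u : ℝ → ℝ,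
    ContinuousOn u (Set.Icc 0 τ) → (∀ t ∈ Set.Icc (0:ℝ) τ, 0 ≤ u t) →
    (∀ t ∈ Set.Icc (0:ℝ) τ, u t ≤ a + ∫ s in (0:ℝ)..t, β (u s)) →
    ∀ t ∈ Set.Icc (0:ℝ) τ, u t ≤ a * M

set_option maxHeartbeats 1000000 in
/-- Grönwall step: if `β y ≤ y / c` for `y ∈ [0, δ2]` and `u` stays in `[0, δ2]` on `[0,T]`,
then the integral inequality gives `u t ≤ a * exp (t / c)`. -/
lemma gron_aux {β : ℝ → ℝ} (hβc : ContinuousOn β (Set.Ici 0))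
    (hβnn : ∀ x, 0 ≤ x → 0 ≤ β x)
    {c δ2 : ℝ} (hc : 0 < c)
    (hβle : ∀ y, 0 ≤ y → y ≤ δ2 → β y ≤ y / c)
    {a T : ℝ} (ha : 0 ≤ a) (hT : 0 ≤ T)
    {u : ℝ → ℝ} (hu : ContinuousOn u (Set.Icc 0 T))
    (hnn : ∀ t ∈ Set.Icc (0:ℝ) T, 0 ≤ u t)
    (hineq : ∀ t ∈ Set.Icc (0:ℝ) T, u t ≤ a + ∫ s in (0:ℝ)..t, β (u s))
    (hsmall : ∀ t ∈ Set.Icc (0:ℝ) T, u t ≤ δ2) :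
    ∀ t ∈ Set.Icc (0:ℝ) T, u t ≤ a * Real.exp (t / c) := by
  set g : ℝ → ℝ := fun s => β (u s) with hg_def
  have hg : ContinuousOn g (Set.Icc 0 T) :=
    hβc.comp hu fun x hx => hnn x hx
  set v : ℝ → ℝ := fun t => a + ∫ s in (0:ℝ)..t, g s with hv_def
  have hvc : ContinuousOn v (Set.Icc 0 T) := by
    have h1 : IntegrableOn g (Set.uIcc 0 T) := by
      rw [Set.uIcc_of_le hT]; exact hg.integrableOn_Icc
    have h2 := intervalIntegral.continuousOn_primitive_interval h1
    rw [Set.uIcc_of_le hT] at h2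
    exact continuousOn_const.add h2
  have hv' : ∀ x ∈ Set.Ico (0:ℝ) T, HasDerivWithinAt v (g x) (Set.Ici x) x := by
    intro x hx
    have hx' : x ∈ Set.Icc (0:ℝ) T := Set.Ico_subset_Icc_self hx
    have hmem : Set.Icc (0:ℝ) T ∈ nhdsWithin x (Set.Ioi x) :=
      Filter.mem_of_superset (Ioc_mem_nhdsGT_of_mem ⟨le_rfl, hx.2⟩)
        (fun y hy => ⟨hx.1.trans hy.1.le, hy.2⟩)
    have hcw : ContinuousWithinAt g (Set.Ioi x) x := (hg x hx').mono_of_mem_nhdsWithin hmem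
    have hmeas : StronglyMeasurableAtFilter g (nhdsWithin x (Set.Ioi x)) :=
      ⟨Set.Icc 0 T, hmem, (hg.aestronglyMeasurable measurableSet_Icc)⟩
    have hint : IntervalIntegrable g volume 0 x :=
      (hg.mono (Set.Icc_subset_Icc le_rfl hx'.2)).intervalIntegrable_of_Icc hx.1
    have := intervalIntegral.integral_hasDerivWithinAt_right (f := g)
      (s := Set.Ici x) (t := Set.Ioi x) hint hmeas hcw
    exact this.const_add a
  have hvnn : ∀ x ∈ Set.Icc (0:ℝ) T, 0 ≤ v x := by
    intro x hx
    have : 0 ≤ ∫ s in (0:ℝ)..x, g s :=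
      intervalIntegral.integral_nonneg hx.1
        (fun s hs => hβnn _ (hnn s ⟨hs.1, hs.2.trans hx.2⟩))
    simpa [hv_def] using add_nonneg ha this
  have huv : ∀ x ∈ Set.Icc (0:ℝ) T, u x ≤ v x := hineq
  have hbound : ∀ x ∈ Set.Ico (0:ℝ) T, ‖g x‖ ≤ (1 / c) * ‖v x‖ + 0 := by
    intro x hx
    have hx' : x ∈ Set.Icc (0:ℝ) T := Set.Ico_subset_Icc_self hx
    have h1 : 0 ≤ g x := hβnn _ (hnn x hx')
    have h2 : g x ≤ u x / c := hβle _ (hnn x hx') (hsmall x hx')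
    rw [Real.norm_of_nonneg h1, Real.norm_of_nonneg (hvnn x hx'), add_zero,
      one_div, inv_mul_eq_div]
    calc g x ≤ u x / c := h2
      _ ≤ v x / c := by gcongr; exact huv x hx'
  have hv0 : ‖v 0‖ ≤ a := by
    simp [hv_def, Real.norm_of_nonneg ha]
  have key := norm_le_gronwallBound_of_norm_deriv_right_le hvc hv' hv0 hbound
  intro t ht
  have := key t ht
  rw [gronwallBound_ε0, sub_zero, Real.norm_of_nonneg (hvnn t ht)] at this
  calc u t ≤ v t := huv t ht
    _ ≤ a * Real.exp (1 / c * t) := this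
    _ = a * Real.exp (t / c) := by rw [one_div, inv_mul_eq_div]

theorem stmt3 (β : ℝ → ℝ)
    (hβc : ContinuousOn β (Set.Ici 0)) (hβm : MonotoneOn β (Set.Ici 0))
    (hβnn : ∀ x, 0 ≤ x → 0 ≤ β x)
    (hliminf : 0 < Filter.liminf (fun x => x / β x) (nhdsWithin 0 (Set.Ioi 0))) :
    IsSlow β := by
  refine ⟨hβc, hβm, hβnn, ?_⟩
  -- Step 1: extract `c > 0` with `c ≤ x / β x` eventually near `0⁺`.
  have hev : ∃ c > (0:ℝ), ∀ᶠ x in nhdsWithin 0 (Set.Ioi 0), c ≤ x / β x := by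
    rw [Filter.liminf_eq] at hliminf
    set S := {a : ℝ | ∀ᶠ x in nhdsWithin (0:ℝ) (Set.Ioi 0), a ≤ x / β x} with hS_def
    have hne : S.Nonempty := by
      by_contra h
      rw [Set.not_nonempty_iff_eq_empty] at h
      rw [h, Real.sSup_empty] at hliminf
      exact lt_irrefl 0 hliminf
    have hbdd : BddAbove S := by
      by_contra h
      rw [Real.sSup_of_not_bddAbove h] at hliminf
      exact lt_irrefl 0 hliminf
    obtain ⟨c, hcS, hc⟩ := exists_lt_of_lt_csSup hne hliminf
    exact ⟨c, hc, hcS⟩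
  obtain ⟨c, hc, hcS⟩ := hev
  -- Step 2: get `δ > 0` with the bound on `Ioo 0 δ`.
  obtain ⟨δ, hδmem, hδsub⟩ := mem_nhdsGT_iff_exists_Ioo_subset.mp hcS
  have hδ : (0:ℝ) < δ := hδmem
  -- Step 3: `β y ≤ y / c` for `0 ≤ y < δ`.
  have hpos : ∀ x ∈ Set.Ioo (0:ℝ) δ, β x ≤ x / c := by
    intro x hx
    have h := hδsub hx
    simp only [Set.mem_setOf_eq] at h
    have hβx : 0 < β x := by
      rcases (hβnn x hx.1.le).lt_or_eq with h' | h'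
      · exact h'
      · rw [← h', div_zero] at h; linarith
    rw [le_div_iff₀ hβx] at h
    rw [le_div_iff₀ hc]
    nlinarith
  have hβ0 : β 0 = 0 := by
    by_contra h0
    have hβ0pos : 0 < β 0 := (hβnn 0 le_rfl).lt_of_ne (Ne.symm h0)
    set x := min (δ / 2) (c * (β 0 / 2)) with hx_def
    have hx0 : 0 < x := lt_min (by linarith) (by positivity)
    have hxδ : x < δ := (min_le_left _ _).trans_lt (by linarith)
    have h1 : β 0 ≤ β x := hβm (Set.self_mem_Ici) (Set.mem_Ici.mpr hx0.le) hx0.le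
    have h2 : β x ≤ x / c := hpos x ⟨hx0, hxδ⟩
    have h3 : x / c ≤ β 0 / 2 := by
      have : x ≤ c * (β 0 / 2) := min_le_right _ _
      rw [div_le_iff₀ hc]
      nlinarith
    linarith
  set δ2 : ℝ := δ / 2 with hδ2_def
  have hδ2 : 0 < δ2 := by positivity
  have hβle : ∀ y, 0 ≤ y → y ≤ δ2 → β y ≤ y / c := by
    intro y hy0 hyδ
    rcases hy0.lt_or_eq with h | h
    · exact hpos y ⟨h, by simp only [hδ2_def] at hyδ; linarith⟩
    · rw [← h, hβ0, zero_div]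
  -- Step 4: choose the constants.
  set M : ℝ := Real.exp 1 with hM_def
  have hM : (0:ℝ) < M := Real.exp_pos 1
  have hM2 : (2:ℝ) ≤ M := by
    have := Real.add_one_le_exp (1:ℝ)
    simp only [hM_def]; linarith
  set ε : ℝ := δ2 / (2 * M) with hε_def
  have hε : (0:ℝ) < ε := by positivity
  have hεM : ε * M = δ2 / 2 := by
    rw [hε_def]; field_simp
  refine ⟨ε, hε, M, hM, c, hc, ?_⟩
  intro a ha u huc hunn huineq
  have haM : a * M ≤ δ2 / 2 := by
    calc a * M ≤ ε * M := mul_le_mul_of_nonneg_right ha.2 hM.le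
      _ = δ2 / 2 := hεM
  -- Grönwall on subintervals where `u ≤ δ2`.
  have hgron : ∀ T ∈ Set.Icc (0:ℝ) c, (∀ t ∈ Set.Icc (0:ℝ) T, u t ≤ δ2) →
      ∀ t ∈ Set.Icc (0:ℝ) T, u t ≤ a * M := by
    intro T hT hsm
    have hsub' : Set.Icc (0:ℝ) T ⊆ Set.Icc (0:ℝ) c := Set.Icc_subset_Icc le_rfl hT.2
    have hkey := gron_aux hβc hβnn hc hβle ha.1 hT.1 (huc.mono hsub')
      (fun t ht => hunn t (hsub' ht)) (fun t ht => huineq t (hsub' ht)) hsm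
    intro t ht
    calc u t ≤ a * Real.exp (t / c) := hkey t ht
      _ ≤ a * M := by
          apply mul_le_mul_of_nonneg_left _ ha.1
          rw [hM_def]
          exact Real.exp_le_exp.mpr (by rw [div_le_one hc]; exact ht.2.trans hT.2)
  -- The bootstrap set.
  set s : Set ℝ := {t | ∀ r ∈ Set.Icc (0:ℝ) t, u r ≤ δ2} with hs_def
  have hsopen : IsOpen (sᶜ ∪ (Set.Icc (0:ℝ) c)ᶜ) := by
    rw [Metric.isOpen_iff]
    intro t ht
    by_cases htI : t ∈ Set.Icc (0:ℝ) c
    · have hts : t ∉ s := by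
        rcases ht with h | h
        · exact h
        · exact absurd htI h
      have : ∃ r, r ∈ Set.Icc (0:ℝ) t ∧ δ2 < u r := by
        by_contra h
        push_neg at h
        exact hts fun r hr => h r hr
      obtain ⟨r, hr, hur⟩ := this
      have hrI : r ∈ Set.Icc (0:ℝ) c := ⟨hr.1, hr.2.trans htI.2⟩
      rcases eq_or_lt_of_le hr.2 with heq | hlt
      · -- r = t : use continuity of u at t within [0,c]
        have hcont := (huc t htI)
        rw [Metric.continuousWithinAt_iff] at hcont
        obtain ⟨η, hη, hball⟩ := hcont (u t - δ2) (by have h' : δ2 < u t := heq ▸ hur; linarith)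
        refine ⟨η, hη, ?_⟩
        intro t' ht'
        by_cases ht'I : t' ∈ Set.Icc (0:ℝ) c
        · left
          intro hcon
          have hw : min t t' ∈ Set.Icc (0:ℝ) c :=
            ⟨le_min htI.1 ht'I.1, (min_le_left _ _).trans htI.2⟩
          have hwd : dist (min t t') t < η := by
            rw [Real.dist_eq]
            rw [Metric.mem_ball, Real.dist_eq] at ht'
            rcases le_total t t' with h | h
            · simp [min_eq_left h, hη]
            · rw [min_eq_right h]
              exact ht'
          have := hball hw hwd
          rw [Real.dist_eq] at this
          have hut : δ2 < u t := heq ▸ hur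
          have h1 : δ2 < u (min t t') := by
            cases' abs_lt.mp this with h1 h2
            linarith
          exact absurd (hcon (min t t') ⟨hw.1, min_le_right _ _⟩) (not_le.mpr h1)
        · exact Or.inr ht'I
      · -- r < t
        refine ⟨t - r, by linarith, ?_⟩
        intro t' ht'
        left
        intro hcon
        rw [Metric.mem_ball, Real.dist_eq] at ht'
        have : r ≤ t' := by
          cases' abs_lt.mp ht' with h1 h2
          linarith
        exact absurd (hcon r ⟨hr.1, this⟩) (not_le.mpr hur)
    · obtain ⟨η, hη, hball⟩ := Metric.isOpen_iff.mp isClosed_Icc.isOpen_compl t htI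
      exact ⟨η, hη, fun x hx => Or.inr (hball hx)⟩
  have hclosed : IsClosed (s ∩ Set.Icc (0:ℝ) c) := by
    have heq : s ∩ Set.Icc (0:ℝ) c = (sᶜ ∪ (Set.Icc (0:ℝ) c)ᶜ)ᶜ := by
      rw [Set.compl_union, compl_compl, compl_compl]
    rw [heq]
    exact hsopen.isClosed_compl
  have h0s : (0:ℝ) ∈ s := by
    intro r hr
    have hr0 : r = 0 := le_antisymm hr.2 hr.1
    subst hr0
    have := huineq 0 ⟨le_rfl, hc.le⟩
    rw [intervalIntegral.integral_same, add_zero] at this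
    have hεδ2 : ε ≤ δ2 / 2 := by
      rw [hε_def, div_le_div_iff₀ (by positivity) (by norm_num)]
      nlinarith
    linarith [ha.2, hδ2]
  have hgt : ∀ t ∈ s ∩ Set.Ico (0:ℝ) c, ∀ y ∈ Set.Ioi t, (s ∩ Set.Ioc t y).Nonempty := by
    rintro t ⟨hts, ht0, htc⟩ y hy
    have hb := hgron t ⟨ht0, htc.le⟩ hts
    have hut : u t ≤ δ2 / 2 := (hb t ⟨ht0, le_rfl⟩).trans haM
    have hcont := huc t ⟨ht0, htc.le⟩
    rw [Metric.continuousWithinAt_iff] at hcont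
    obtain ⟨η, hη, hball⟩ := hcont (δ2 / 4) (by positivity)
    set t₂ : ℝ := min (min y c) (t + η / 2) with ht₂_def
    have ht₂t : t < t₂ := lt_min (lt_min hy htc) (by linarith)
    refine ⟨t₂, ?_, ht₂t, (min_le_left _ _).trans (min_le_left _ _)⟩
    intro r hr
    rcases le_or_gt r t with h | h
    · exact hts r ⟨hr.1, h⟩
    · have hrc : r ≤ c := hr.2.trans ((min_le_left _ _).trans (min_le_right _ _))
      have hrd : dist r t < η := by
        rw [Real.dist_eq, abs_of_nonneg (by linarith)]
        have : r ≤ t + η / 2 := hr.2.trans (min_le_right _ _)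
        linarith
      have := hball ⟨hr.1, hrc⟩ hrd
      rw [Real.dist_eq] at this
      cases' abs_lt.mp this with h1 h2
      linarith
  have hsub : Set.Icc (0:ℝ) c ⊆ s := hclosed.Icc_subset_of_forall_exists_gt h0s hgt
  exact hgron c ⟨hc.le, le_rfl⟩ (fun r hr => hsub hr r ⟨hr.1, le_rfl⟩)
end

section
/- If β: [0,∞) → [0,∞) is continuous, nondecreasing, β(0) = 0, β(x) > 0 for x > 0, and there exists ε > 0 such that β(λx) ≤ λβ(x) for all 0 ≤ λ ≤ ε and all x ≥ 0, then β is a slow function. -/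
open MeasureTheory intervalIntegral Filter Topology

theorem stmt4 (β : ℝ → ℝ)
    (hβc : ContinuousOn β (Set.Ici 0)) (hβm : MonotoneOn β (Set.Ici 0))
    (hβnn : ∀ x, 0 ≤ x → 0 ≤ β x) (hβ0 : β 0 = 0)
    (hβpos : ∀ x, 0 < x → 0 < β x)
    (hhom : ∃ ε > (0:ℝ), ∀ lam, 0 ≤ lam → lam ≤ ε → ∀ x, 0 ≤ x → β (lam * x) ≤ lam * β x) :
    IsSlow β := by
  obtain ⟨e0, he0, hhom⟩ := hhom
  set K : ℝ := β 1 with hKdef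
  have hK : 0 < K := hβpos 1 one_pos
  have hβe0 : 0 < β e0 := hβpos e0 he0
  set τ : ℝ := e0 / (2 * β e0) with hτdef
  have hτ : 0 < τ := by positivity
  set ε : ℝ := e0 / 4 with hεdef
  have hε : 0 < ε := by positivity
  set M : ℝ := Real.exp (K * τ) with hMdef
  refine ⟨hβc, hβm, hβnn, ε, hε, M, Real.exp_pos _, τ, hτ, ?_⟩
  intro a ha u hu hunn hui
  -- continuity of β ∘ u
  have hβu : ContinuousOn (fun s => β (u s)) (Set.Icc 0 τ) :=
    hβc.comp hu fun s hs => hunn s hs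
  have hsub : ∀ t ∈ Set.Icc (0:ℝ) τ, Set.uIcc (0:ℝ) t ⊆ Set.Icc 0 τ := by
    intro t ht
    rw [Set.uIcc_of_le ht.1]
    exact Set.Icc_subset_Icc le_rfl ht.2
  have hint : ∀ t ∈ Set.Icc (0:ℝ) τ,
      IntervalIntegrable (fun s => β (u s)) volume 0 t := fun t ht =>
    (hβu.mono (hsub t ht)).intervalIntegrable
  have huint : ∀ t ∈ Set.Icc (0:ℝ) τ,
      IntervalIntegrable (fun s => K * u s) volume 0 t := fun t ht =>
    ((continuousOn_const.mul hu).mono (hsub t ht)).intervalIntegrable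
  -- Step 1: trap: u ≤ e0 on [0, τ]
  have htrap : ∀ t ∈ Set.Icc (0:ℝ) τ, u t ≤ e0 := by
    by_contra hcon
    push_neg at hcon
    set S : Set ℝ := Set.Icc 0 τ ∩ u ⁻¹' Set.Ici e0 with hSdef
    have hSne : S.Nonempty := by
      obtain ⟨t, ht, htu⟩ := hcon
      exact ⟨t, ht, le_of_lt htu⟩
    have hSclosed : IsClosed S :=
      hu.preimage_isClosed_of_isClosed isClosed_Icc isClosed_Ici
    have hSbdd : BddBelow S := ⟨0, fun x hx => hx.1.1⟩
    set t₀ : ℝ := sInf S with ht₀def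
    have ht₀S : t₀ ∈ S := hSclosed.csInf_mem hSne hSbdd
    have ht₀τ : t₀ ∈ Set.Icc (0:ℝ) τ := ht₀S.1
    have ht₀u : e0 ≤ u t₀ := ht₀S.2
    -- u ≤ e0 on [0, t₀)
    have hlt : ∀ s ∈ Set.Ico (0:ℝ) t₀, u s ≤ e0 := by
      intro s hs
      by_contra hs'
      push_neg at hs'
      have : s ∈ S := ⟨⟨hs.1, le_trans (le_of_lt hs.2) ht₀τ.2⟩, le_of_lt hs'⟩
      exact absurd (csInf_le hSbdd this) (not_le.2 hs.2)
    -- u t₀ ≤ e0 as well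
    have hle : ∀ s ∈ Set.Icc (0:ℝ) t₀, u s ≤ e0 := by
      intro s hs
      rcases lt_or_eq_of_le hs.2 with hs2 | hs2
      · exact hlt s ⟨hs.1, hs2⟩
      · rcases lt_or_eq_of_le hs.1 with hs1 | hs1
        · -- 0 < s : continuity from the left
          have hne : (𝓝[Set.Ico 0 s] s).NeBot := by
            rw [← mem_closure_iff_nhdsWithin_neBot, closure_Ico (ne_of_lt hs1)]
            exact ⟨hs.1, le_rfl⟩
          have hcw : ContinuousWithinAt u (Set.Ico 0 s) s :=
            (hu s ⟨hs.1, le_trans hs.2 ht₀τ.2⟩).mono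
              fun x hx => ⟨hx.1, le_trans (le_of_lt (lt_of_lt_of_le hx.2 hs.2)) ht₀τ.2⟩
          refine le_of_tendsto hcw ?_
          filter_upwards [self_mem_nhdsWithin] with x hx
          exact hlt x ⟨hx.1, lt_of_lt_of_le hx.2 hs.2⟩
        · -- s = 0 : u 0 ≤ a < e0
          have h := hui s ⟨hs.1, le_trans hs.2 ht₀τ.2⟩
          rw [← hs1] at h
          simp only [intervalIntegral.integral_same, add_zero] at h
          rw [← hs1]
          have hε4 : ε = e0 / 4 := hεdef
          linarith [ha.2]
    -- bound the integral
    have hintle : (∫ s in (0:ℝ)..t₀, β (u s)) ≤ t₀ * β e0 := by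
      have h1 : (∫ s in (0:ℝ)..t₀, β (u s)) ≤ ∫ _s in (0:ℝ)..t₀, β e0 := by
        apply intervalIntegral.integral_mono_on ht₀τ.1 (hint t₀ ht₀τ)
          intervalIntegrable_const
        intro x hx
        exact hβm (hunn x ⟨hx.1, le_trans hx.2 ht₀τ.2⟩) (le_of_lt he0) (hle x hx)
      rwa [intervalIntegral.integral_const, sub_zero, smul_eq_mul] at h1
    have := hui t₀ ht₀τ
    have hτβ : t₀ * β e0 ≤ e0 / 2 := by
      have : t₀ * β e0 ≤ τ * β e0 := by
        apply mul_le_mul_of_nonneg_right ht₀τ.2 (le_of_lt hβe0)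
      calc t₀ * β e0 ≤ τ * β e0 := this
        _ = e0 / 2 := by rw [hτdef, div_mul_eq_mul_div, mul_div_mul_right _ _ hβe0.ne']
    linarith [ha.2]
  -- Step 2: linear bound β (u t) ≤ K * u t on [0, τ]
  have hlin : ∀ t ∈ Set.Icc (0:ℝ) τ, β (u t) ≤ K * u t := by
    intro t ht
    have := hhom (u t) (hunn t ht) (htrap t ht) 1 zero_le_one
    rw [mul_one] at this
    linarith [this, mul_comm (u t) K]
  -- Step 3: Grönwall with v t = a + ∫₀ᵗ K * u
  set v : ℝ → ℝ := fun t => a + ∫ s in (0:ℝ)..t, K * u s with hvdef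
  have huv : ∀ t ∈ Set.Icc (0:ℝ) τ, u t ≤ v t := by
    intro t ht
    refine le_trans (hui t ht) (add_le_add_right ?_ a)
    apply intervalIntegral.integral_mono_on ht.1 (hint t ht) (huint t ht)
    intro x hx
    exact hlin x ⟨hx.1, le_trans hx.2 ht.2⟩
  have hvnn : ∀ t ∈ Set.Icc (0:ℝ) τ, 0 ≤ v t := by
    intro t ht
    have h2 : (0:ℝ) ≤ ∫ s in (0:ℝ)..t, K * u s := by
      apply intervalIntegral.integral_nonneg ht.1
      intro x hx
      exact mul_nonneg (le_of_lt hK) (hunn x ⟨hx.1, le_trans hx.2 ht.2⟩)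
    show (0:ℝ) ≤ a + ∫ s in (0:ℝ)..t, K * u s
    linarith [ha.1]
  have hvcont : ContinuousOn v (Set.Icc 0 τ) := by
    apply continuousOn_const.add
    have h := intervalIntegral.continuousOn_primitive_interval
      (f := fun s => K * u s) (μ := volume) (a := 0) (b := τ) ?_
    · rwa [Set.uIcc_of_le (le_of_lt hτ)] at h
    · rw [Set.uIcc_of_le (le_of_lt hτ)]
      exact ((continuous_const.continuousOn.mul hu)).integrableOn_compact isCompact_Icc
  have hvderiv : ∀ t ∈ Set.Ico (0:ℝ) τ, HasDerivWithinAt v (K * u t) (Set.Ici t) t := by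
    intro t ht
    have hmem : Set.Icc (0:ℝ) τ ∈ 𝓝[Set.Ici t] t := by
      refine Filter.mem_of_superset (inter_mem_nhdsWithin _ (Iio_mem_nhds ht.2)) ?_
      intro x hx
      exact ⟨le_trans ht.1 hx.1, le_of_lt hx.2⟩
    have hmem' : Set.Icc (0:ℝ) τ ∈ 𝓝[Set.Ioi t] t :=
      nhdsWithin_mono t Set.Ioi_subset_Ici_self hmem
    have hcw : ContinuousWithinAt (fun s => K * u s) (Set.Ioi t) t :=
      ((continuous_const.continuousOn.mul hu) t ⟨ht.1, le_of_lt ht.2⟩).mono_of_mem_nhdsWithin hmem'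
    have hmeas : StronglyMeasurableAtFilter (fun s => K * u s) (𝓝[Set.Ioi t] t) :=
      ⟨Set.Icc 0 τ, hmem',
        ((continuous_const.continuousOn.mul hu)).aestronglyMeasurable measurableSet_Icc⟩
    exact (intervalIntegral.integral_hasDerivWithinAt_right (s := Set.Ici t)
      (t := Set.Ioi t) (huint t ⟨ht.1, le_of_lt ht.2⟩) hmeas hcw).const_add a
  have hgron := norm_le_gronwallBound_of_norm_deriv_right_le (f := v)
    (f' := fun t => K * u t) (δ := a) (K := K) (ε := 0) (a := 0) (b := τ)
    hvcont hvderiv ?_ ?_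
  · intro t ht
    have h1 := hgron t ht
    rw [gronwallBound_ε0, sub_zero, Real.norm_of_nonneg (hvnn t ht)] at h1
    refine le_trans (huv t ht) (le_trans h1 ?_)
    exact mul_le_mul_of_nonneg_left
      (Real.exp_le_exp.2 (mul_le_mul_of_nonneg_left ht.2 (le_of_lt hK))) ha.1
  · have : v 0 = a := by simp [hvdef]
    rw [this, Real.norm_of_nonneg ha.1]
  · intro t ht
    rw [Real.norm_of_nonneg (hvnn t ⟨ht.1, le_of_lt ht.2⟩), add_zero,
      Real.norm_of_nonneg (mul_nonneg (le_of_lt hK) (hunn t ⟨ht.1, le_of_lt ht.2⟩))]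
    exact mul_le_mul_of_nonneg_left (huv t ⟨ht.1, le_of_lt ht.2⟩) (le_of_lt hK)
end

section
/- If β: [0,∞) → [0,∞) is a slow function, then for any constants a, b ≥ 0, the function x ↦ aβ(x) + bx is also a slow function. -/
open MeasureTheory intervalIntegral

theorem stmt5 (β : ℝ → ℝ) (hβ : IsSlow β) (a b : ℝ) (ha : 0 ≤ a) (hb : 0 ≤ b) :
    IsSlow (fun x => a * β x + b * x) := by
  obtain ⟨hβc, hβm, hβ0, ε, hε, M, hM, τ, hτ, hslow⟩ := hβ
  refine ⟨?_, ?_, ?_, ?_⟩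
  · exact (continuousOn_const.mul hβc).add (continuousOn_const.mul (continuous_id.continuousOn))
  · intro x hx y hy hxy
    have := hβm hx hy hxy
    dsimp only
    nlinarith
  · intro x hx
    have := hβ0 x hx
    positivity
  -- setup constants
  set K₀ : ℝ := Real.exp (b * τ) with hK₀def
  have hK₀1 : (1:ℝ) ≤ K₀ := by
    rw [hK₀def]
    have : (0:ℝ) ≤ b * τ := by positivity
    simpa using Real.one_le_exp this
  have hK₀ : (0:ℝ) < K₀ := lt_of_lt_of_le one_pos hK₀1
  set τ₁ : ℝ := min τ (τ / (K₀ * a + 1)) with hτ₁def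
  have hτ₁pos : 0 < τ₁ := lt_min hτ (by positivity)
  have hτ₁τ : τ₁ ≤ τ := min_le_left _ _
  refine ⟨ε / K₀, by positivity, K₀ * (M + 1), by positivity, τ₁, hτ₁pos, ?_⟩
  intro c hc u hu hu0 hineq
  have hc0 : 0 ≤ c := hc.1
  have hcε : K₀ * c ≤ ε := by
    have := hc.2
    rw [le_div_iff₀ hK₀] at this
    linarith [this]
  -- the clamped extension of u
  set uu : ℝ → ℝ := fun s => u (max 0 (min s τ₁)) with huudef
  have hclamp : ∀ s : ℝ, max 0 (min s τ₁) ∈ Set.Icc 0 τ₁ := by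
    intro s
    constructor
    · exact le_max_left _ _
    · exact max_le hτ₁pos.le (min_le_right _ _)
  have huuc : Continuous uu := by
    apply hu.comp_continuous (continuous_const.max (continuous_id.min continuous_const))
    exact hclamp
  have huueq : ∀ s ∈ Set.Icc (0:ℝ) τ₁, uu s = u s := by
    intro s hs
    simp only [huudef]
    rw [min_eq_left hs.2, max_eq_right hs.1]
  have huu0 : ∀ s, 0 ≤ uu s := fun s => hu0 _ (hclamp s)
  -- g = β ∘ uu
  set g : ℝ → ℝ := fun s => β (uu s) with hgdef
  have hgc : Continuous g := hβc.comp_continuous huuc fun s => huu0 s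
  have hg0 : ∀ s, 0 ≤ g s := fun s => hβ0 _ (huu0 s)
  have hgint : ∀ x y : ℝ, IntervalIntegrable g volume x y := fun x y =>
    hgc.intervalIntegrable x y
  have hgmono : ∀ {x y : ℝ}, 0 ≤ x → x ≤ y →
      (∫ s in (0:ℝ)..x, g s) ≤ ∫ s in (0:ℝ)..y, g s := by
    intro x y hx hxy
    apply intervalIntegral.integral_mono_interval le_rfl hx hxy
    · filter_upwards with s using hg0 s
    · exact hgint 0 y
  have hgI0 : ∀ x : ℝ, 0 ≤ x → 0 ≤ ∫ s in (0:ℝ)..x, g s := fun x hx => by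
    simpa using hgmono le_rfl hx
  -- Step 1: Gronwall
  have step1 : ∀ t ∈ Set.Icc (0:ℝ) τ₁,
      u t ≤ K₀ * c + (K₀ * a) * ∫ s in (0:ℝ)..t, g s := by
    intro t ht
    set c' : ℝ := c + a * ∫ s in (0:ℝ)..t, g s with hc'def
    have hc'0 : 0 ≤ c' := by
      have := hgI0 t ht.1
      positivity
    set h : ℝ → ℝ := fun r => ∫ s in (0:ℝ)..r, uu s with hhdef
    have hhderiv : ∀ r : ℝ, HasDerivAt h (uu r) r := fun r =>
      (huuc.integral_hasStrictDerivAt 0 r).hasDerivAt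
    have hh0 : ∀ x : ℝ, 0 ≤ x → 0 ≤ h x := by
      intro x hx
      apply intervalIntegral.integral_nonneg hx
      intro s _; exact huu0 s
    have hbound : ∀ x ∈ Set.Icc (0:ℝ) t, u x ≤ b * h x + c' := by
      intro x hx
      have hxτ₁ : x ∈ Set.Icc (0:ℝ) τ₁ := ⟨hx.1, hx.2.trans ht.2⟩
      have h1 := hineq x hxτ₁
      have hcongr : (∫ s in (0:ℝ)..x, (a * β (u s) + b * u s))
          = ∫ s in (0:ℝ)..x, (a * g s + b * uu s) := by
        apply intervalIntegral.integral_congr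
        intro s hs
        rw [Set.uIcc_of_le hx.1] at hs
        have hsτ₁ : s ∈ Set.Icc (0:ℝ) τ₁ := ⟨hs.1, hs.2.trans hxτ₁.2⟩
        show a * β (u s) + b * u s = a * g s + b * uu s
        rw [show g s = β (uu s) from rfl, huueq s hsτ₁]
      have hsplit : (∫ s in (0:ℝ)..x, (a * g s + b * uu s))
          = a * (∫ s in (0:ℝ)..x, g s) + b * (∫ s in (0:ℝ)..x, uu s) := by
        rw [intervalIntegral.integral_add (f := fun s => a * g s) (g := fun s => b * uu s) ((continuous_const.mul hgc).intervalIntegrable 0 x)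
          ((continuous_const.mul huuc).intervalIntegrable 0 x),
          intervalIntegral.integral_const_mul, intervalIntegral.integral_const_mul]
      have hgle : a * (∫ s in (0:ℝ)..x, g s) ≤ a * ∫ s in (0:ℝ)..t, g s :=
        mul_le_mul_of_nonneg_left (hgmono hx.1 hx.2) ha
      calc u x ≤ c + ∫ s in (0:ℝ)..x, (a * β (u s) + b * u s) := h1
        _ = c + (a * (∫ s in (0:ℝ)..x, g s) + b * h x) := by rw [hcongr, hsplit]
        _ ≤ b * h x + c' := by rw [hc'def]; linarith [hgle]
    have hgron : h t ≤ gronwallBound 0 b c' t := by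
      have := norm_le_gronwallBound_of_norm_deriv_right_le
        (f := h) (f' := uu) (δ := 0) (K := b) (ε := c') (a := 0) (b := t)
        (Continuous.continuousOn (by
          exact intervalIntegral.continuous_primitive (fun x y => huuc.intervalIntegrable x y) 0))
        (fun x _ => (hhderiv x).hasDerivWithinAt)
        (by simp [hhdef]) ?_ t ⟨ht.1, le_rfl⟩
      · rw [sub_zero] at this
        exact (le_abs_self _).trans (by simpa using this)
      · intro x hx
        have hx' : x ∈ Set.Icc (0:ℝ) t := ⟨hx.1, hx.2.le⟩
        have hxτ₁ : x ∈ Set.Icc (0:ℝ) τ₁ := ⟨hx'.1, hx'.2.trans ht.2⟩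
        have h1 : uu x = u x := huueq x hxτ₁
        rw [Real.norm_eq_abs, Real.norm_eq_abs, abs_of_nonneg (huu0 x),
          abs_of_nonneg (hh0 x hx.1), h1]
        exact hbound x hx'
    have hfin : c' + b * gronwallBound 0 b c' t = c' * Real.exp (b * t) := by
      by_cases hb0 : b = 0
      · simp [gronwallBound, hb0]
      · rw [gronwallBound_of_K_ne_0 hb0]
        field_simp
        ring
    have h2 : u t ≤ c' * Real.exp (b * t) := by
      rw [← hfin]
      have := hbound t ⟨ht.1, le_rfl⟩
      have h3 : b * h t ≤ b * gronwallBound 0 b c' t :=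
        mul_le_mul_of_nonneg_left hgron hb
      linarith
    have hexp : Real.exp (b * t) ≤ K₀ := by
      rw [hK₀def]
      exact Real.exp_le_exp.2 (mul_le_mul_of_nonneg_left (ht.2.trans hτ₁τ) hb)
    calc u t ≤ c' * Real.exp (b * t) := h2
      _ ≤ c' * K₀ := mul_le_mul_of_nonneg_left hexp hc'0
      _ = K₀ * c + (K₀ * a) * ∫ s in (0:ℝ)..t, g s := by rw [hc'def]; ring
  -- Step 2
  intro t ht
  by_cases ha0 : a = 0
  · have := step1 t ht
    rw [ha0] at this
    simp only [zero_mul, mul_zero, add_zero] at this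
    nlinarith [mul_nonneg (mul_nonneg hK₀.le hc0) hM.le]
  · have haa : 0 < a := lt_of_le_of_ne ha (Ne.symm ha0)
    set A : ℝ := K₀ * a with hAdef
    have hA : 0 < A := by positivity
    set φ : ℝ → ℝ := fun r => uu (r / A) with hφdef
    have hφc : Continuous φ := huuc.comp (continuous_id.div_const A)
    have hAτ₁ : A * τ₁ ≤ τ := by
      have h1 : τ₁ ≤ τ / (K₀ * a + 1) := min_le_right _ _
      have h2 : A * τ₁ ≤ A * (τ / (K₀ * a + 1)) := mul_le_mul_of_nonneg_left h1 hA.le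
      have hD : (0:ℝ) < K₀ * a + 1 := by positivity
      have h3 : A * (τ / (K₀ * a + 1)) ≤ τ := by
        rw [hAdef, ← mul_div_assoc, div_le_iff₀ hD]
        nlinarith [mul_nonneg (mul_nonneg hK₀.le ha) hτ.le]
      linarith
    have hφineq : ∀ r ∈ Set.Icc (0:ℝ) τ, φ r ≤ K₀ * c + ∫ s in (0:ℝ)..r, β (φ s) := by
      intro r hr
      have hrA : 0 ≤ r / A := div_nonneg hr.1 hA.le
      set t₀ : ℝ := min (r / A) τ₁ with ht₀def
      have ht₀ : t₀ ∈ Set.Icc (0:ℝ) τ₁ := ⟨le_min hrA hτ₁pos.le, min_le_right _ _⟩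
      have hφr : φ r = u t₀ := by
        simp only [hφdef, huudef, ht₀def]
        rw [max_eq_right (le_min hrA hτ₁pos.le)]
      have hint : (∫ s in (0:ℝ)..r, β (φ s)) = A * ∫ x in (0:ℝ)..(r / A), g x := by
        have h := intervalIntegral.integral_comp_div (a := 0) (b := r) (f := g) (c := A) hA.ne'
        simp only [zero_div, smul_eq_mul] at h
        exact h
      have h1 := step1 t₀ ht₀
      have h2 : (∫ s in (0:ℝ)..t₀, g s) ≤ ∫ s in (0:ℝ)..(r / A), g s :=
        hgmono ht₀.1 (min_le_left _ _)
      rw [hφr, hint]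
      calc u t₀ ≤ K₀ * c + A * ∫ s in (0:ℝ)..t₀, g s := h1
        _ ≤ K₀ * c + A * ∫ s in (0:ℝ)..(r / A), g s := by
            have := mul_le_mul_of_nonneg_left h2 hA.le
            linarith
    have hconc := hslow (K₀ * c) ⟨by positivity, hcε⟩ φ hφc.continuousOn
      (fun r _ => huu0 _) hφineq (A * t) ⟨mul_nonneg hA.le ht.1, ?_⟩
    · have hφt : φ (A * t) = u t := by
        simp only [hφdef]
        rw [mul_div_cancel_left₀ _ hA.ne']
        exact huueq t ht
      rw [hφt] at hconc
      calc u t ≤ K₀ * c * M := hconc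
        _ ≤ c * (K₀ * (M + 1)) := by nlinarith
    · calc A * t ≤ A * τ₁ := mul_le_mul_of_nonneg_left ht.2 hA.le
        _ ≤ τ := hAτ₁
end

section
/- Every slow function is a uniqueness function: if β: [0,∞) → [0,∞) is slow, then the only nonnegative solution u of u' = β(u) on an interval [0,τ₀) with u(0) = 0 is the zero function. -/
open MeasureTheory intervalIntegral

theorem stmt6 (β : ℝ → ℝ) (hβ : IsSlow β) :
    ∀ (τ₀ : ℝ) (u : ℝ → ℝ), 0 < τ₀ →
      (∀ t ∈ Set.Ico (0:ℝ) τ₀, 0 ≤ u t) → u 0 = 0 →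
      (∀ t ∈ Set.Ico (0:ℝ) τ₀, HasDerivAt u (β (u t)) t) →
      ∀ t ∈ Set.Ico (0:ℝ) τ₀, u t = 0 := by
  obtain ⟨hcβ, hmono, hβnn, ε, hε, M, hM, τ, hτ, hslow⟩ := hβ
  intro τ₀ u hτ₀ hunn hu0 hderiv
  have hucont : ContinuousOn u (Set.Ico 0 τ₀) := fun t ht =>
    ((hderiv t ht).continuousAt).continuousWithinAt
  -- key step: from a zero of u, u stays zero for time τ
  have step : ∀ t₁ ∈ Set.Ico (0:ℝ) τ₀, u t₁ = 0 →
      ∀ t₂ ∈ Set.Ico (0:ℝ) τ₀, t₁ ≤ t₂ → t₂ ≤ t₁ + τ → u t₂ = 0 := by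
    intro t₁ ht₁ hu1 t₂ ht₂ h12 h2τ
    have hsub : Set.Icc t₁ t₂ ⊆ Set.Ico 0 τ₀ := fun x hx =>
      ⟨le_trans ht₁.1 hx.1, lt_of_le_of_lt hx.2 ht₂.2⟩
    set v : ℝ → ℝ := fun s => u (min (t₁ + s) t₂) with hvdef
    have hmem : ∀ s : ℝ, 0 ≤ s → min (t₁ + s) t₂ ∈ Set.Icc t₁ t₂ := by
      intro s hs
      exact ⟨le_min (by linarith) h12, min_le_right _ _⟩
    have hminC : Continuous (fun s : ℝ => min (t₁ + s) t₂) :=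
      (continuous_const.add continuous_id).min continuous_const
    have hvcont : ContinuousOn v (Set.Icc 0 τ) := by
      refine (hucont.mono hsub).comp hminC.continuousOn ?_
      intro s hs; exact hmem s hs.1
    have hvnn : ∀ s ∈ Set.Icc (0:ℝ) τ, 0 ≤ v s := fun s hs =>
      hunn _ (hsub (hmem s hs.1))
    -- FTC on [t₁, w]
    have key : ∀ w ∈ Set.Icc t₁ t₂, u w = ∫ r in t₁..w, β (u r) := by
      intro w hw
      have huIcc : Set.uIcc t₁ w = Set.Icc t₁ w := Set.uIcc_of_le hw.1
      have hci : ContinuousOn (fun r => β (u r)) (Set.Icc t₁ w) := by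
        refine hcβ.comp (hucont.mono (fun x hx => hsub ⟨hx.1, le_trans hx.2 hw.2⟩)) ?_
        intro x hx
        exact hunn x (hsub ⟨hx.1, le_trans hx.2 hw.2⟩)
      have hint : IntervalIntegrable (fun r => β (u r)) volume t₁ w :=
        (hci.mono (by rw [huIcc])).intervalIntegrable
      have hftc := intervalIntegral.integral_eq_sub_of_hasDerivAt
        (f := u) (f' := fun r => β (u r)) (a := t₁) (b := w)
        (fun x hx => hderiv x (hsub ⟨(huIcc ▸ hx).1, (huIcc ▸ hx).2.trans hw.2⟩)) hint
      rw [hftc, hu1, sub_zero]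
    -- β ∘ v continuous on [0, τ]
    have hβvcont : ContinuousOn (fun r => β (v r)) (Set.Icc 0 τ) := by
      refine hcβ.comp hvcont ?_
      intro x hx; exact hvnn x hx
    -- integral inequality for v
    have hineq : ∀ s ∈ Set.Icc (0:ℝ) τ, v s ≤ 0 + ∫ r in (0:ℝ)..s, β (v r) := by
      intro s hs
      set m : ℝ := min (t₁ + s) t₂ with hm
      have hmIcc : m ∈ Set.Icc t₁ t₂ := hmem s hs.1
      have h1 : v s = ∫ r in t₁..m, β (u r) := key m hmIcc
      have h2 : (∫ r in (0:ℝ)..(m - t₁), β (u (t₁ + r))) = ∫ r in t₁..m, β (u r) := by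
        rw [intervalIntegral.integral_comp_add_left (fun r => β (u r)) t₁]
        norm_num
      have h3 : (∫ r in (0:ℝ)..(m - t₁), β (v r))
          = ∫ r in (0:ℝ)..(m - t₁), β (u (t₁ + r)) := by
        refine intervalIntegral.integral_congr ?_
        intro r hr
        rw [Set.uIcc_of_le (by linarith [hmIcc.1])] at hr
        have hmin : min (t₁ + r) t₂ = t₁ + r := by
          refine min_eq_left ?_
          have h5 : t₁ + r ≤ m := by linarith [hr.2]
          linarith [hmIcc.2]
        simp only [hvdef, hmin]
      have hsubτ : Set.uIcc (0:ℝ) s ⊆ Set.Icc 0 τ := by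
        rw [Set.uIcc_of_le hs.1]
        exact Set.Icc_subset_Icc le_rfl hs.2
      have hii : IntervalIntegrable (fun r => β (v r)) volume 0 s :=
        (hβvcont.mono hsubτ).intervalIntegrable
      have h4 : (∫ r in (0:ℝ)..(m - t₁), β (v r)) ≤ ∫ r in (0:ℝ)..s, β (v r) := by
        refine intervalIntegral.integral_mono_interval le_rfl (by linarith [hmIcc.1])
          (by linarith [min_le_left (t₁ + s) t₂]) ?_ hii
        filter_upwards [ae_restrict_mem measurableSet_Ioc] with x hx
        exact hβnn _ (hunn _ (hsub (hmem x hx.1.le)))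
      rw [h1, ← h2, ← h3, zero_add]
      exact h4
    -- apply slowness with a = 0
    have hconc := hslow 0 ⟨le_rfl, le_of_lt hε⟩ v hvcont hvnn hineq (t₂ - t₁)
      ⟨by linarith, by linarith⟩
    have hvt : v (t₂ - t₁) = u t₂ := by
      simp only [hvdef]
      rw [show t₁ + (t₂ - t₁) = t₂ by ring, min_self]
    rw [hvt, zero_mul] at hconc
    exact le_antisymm hconc (hunn t₂ ht₂)
  -- chain the step
  have chain : ∀ n : ℕ, ∀ t ∈ Set.Ico (0:ℝ) τ₀, t ≤ n * τ → u t = 0 := by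
    intro n
    induction n with
    | zero =>
      intro t ht hle
      have : t = 0 := le_antisymm (by simpa using hle) ht.1
      rw [this, hu0]
    | succ n ih =>
      intro t ht hle
      by_cases h : t ≤ n * τ
      · exact ih t ht h
      · push_neg at h
        have hnτ : (n : ℝ) * τ ∈ Set.Ico (0:ℝ) τ₀ :=
          ⟨by positivity, lt_trans h ht.2⟩
        have h0 : u ((n : ℝ) * τ) = 0 := ih _ hnτ le_rfl
        refine step _ hnτ h0 t ht (le_of_lt h) ?_
        push_cast at hle ⊢
        linarith
  intro t ht
  obtain ⟨n, hn⟩ := exists_nat_ge (t / τ)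
  exact chain n t ht ((div_le_iff₀ hτ).mp hn)
end

section
/- Let a > 0 and β: [0,a] → [0,∞) be measurable with ∫₀ᵃ β(x) dx < 1, viewed in L²(0,a), and define the operator A on L²(0,a) by Au = u' with domain D(A) = { u ∈ H¹(0,a) : u(0) = ∫₀ᵃ β(x)u(x) dx }. Then for λ := (1/2)‖β‖²_{L²}, the operator A + λI is accretive: ⟨u, Au + λu⟩_{L²} ≥ (1/2)u(a)² ≥ 0 for all u ∈ D(A). -/
open MeasureTheory intervalIntegral

theorem stmt15 (a : ℝ) (ha : 0 < a) (β : ℝ → ℝ)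
    (hβmeas : Measurable β) (hβnn : ∀ x ∈ Set.Icc (0:ℝ) a, 0 ≤ β x)
    (hβ1 : IntervalIntegrable β volume 0 a)
    (hβ2 : IntervalIntegrable (fun x => β x ^ 2) volume 0 a)
    (hβint : (∫ x in (0:ℝ)..a, β x) < 1)
    (lam : ℝ) (hlam : lam = (1/2) * ∫ x in (0:ℝ)..a, β x ^ 2)
    -- `u ∈ D(A)`: `u ∈ H¹(0,a)` (with derivative `u'`) satisfying the nonlocal boundary cond.
    (u u' : ℝ → ℝ)
    (hu : ∀ t ∈ Set.Icc (0:ℝ) a, HasDerivAt u (u' t) t)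
    (hu' : IntervalIntegrable u' volume 0 a)
    (hβu : IntervalIntegrable (fun x => β x * u x) volume 0 a)
    (hbc : u 0 = ∫ x in (0:ℝ)..a, β x * u x) :
    (∫ x in (0:ℝ)..a, u x * (u' x + lam * u x)) ≥ (1/2) * (u a) ^ 2 ∧
    (1/2) * (u a) ^ 2 ≥ 0 := by
  have hIcc : Set.uIcc (0:ℝ) a = Set.Icc 0 a := Set.uIcc_of_le ha.le
  -- continuity of u on [0,a]
  have hucont : ContinuousOn u (Set.uIcc (0:ℝ) a) := by
    rw [hIcc]
    exact fun x hx => (hu x hx).continuousAt.continuousWithinAt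
  -- integrability facts
  have huu' : IntervalIntegrable (fun x => u x * u' x) volume 0 a :=
    hu'.continuousOn_mul hucont
  have hu2 : IntervalIntegrable (fun x => u x ^ 2) volume 0 a := by
    apply ContinuousOn.intervalIntegrable
    exact (hucont.mul hucont).congr (fun x hx => by rw [Pi.mul_apply]; ring)
  -- fundamental theorem: ∫ u u' = ½ u(a)² − ½ u(0)²
  have hftc : (∫ x in (0:ℝ)..a, u x * u' x) = u a ^ 2 / 2 - u 0 ^ 2 / 2 := by
    have := intervalIntegral.integral_eq_sub_of_hasDerivAt
      (f := fun x => u x ^ 2 / 2) (f' := fun x => u x * u' x) (a := 0) (b := a)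
      (fun x hx => by
        have : HasDerivAt (fun x => u x ^ 2 / 2) (((2:ℕ):ℝ) * u x ^ (2 - 1) * u' x / 2) x :=
          ((hu x (hIcc ▸ hx)).pow 2).div_const 2
        refine this.congr_deriv ?_; ring) huu'
    simpa using this
  set B := ∫ x in (0:ℝ)..a, β x ^ 2 with hB
  set C := ∫ x in (0:ℝ)..a, β x * u x with hC
  set U := ∫ x in (0:ℝ)..a, u x ^ 2 with hU
  -- Cauchy-Schwarz via discriminant
  have hCS : C ^ 2 ≤ B * U := by
    have hquad : ∀ t : ℝ, 0 ≤ B * (t * t) + (-2 * C) * t + U := by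
      intro t
      have hint : IntervalIntegrable
          (fun x => t ^ 2 * β x ^ 2 + (-2 * t) * (β x * u x) + u x ^ 2) volume 0 a :=
        ((hβ2.const_mul _).add (hβu.const_mul _)).add hu2
      have h1 : (0:ℝ) ≤ ∫ x in (0:ℝ)..a,
          (t ^ 2 * β x ^ 2 + (-2 * t) * (β x * u x) + u x ^ 2) := by
        apply intervalIntegral.integral_nonneg ha.le
        intro x hx
        have : t ^ 2 * β x ^ 2 + (-2 * t) * (β x * u x) + u x ^ 2
            = (t * β x - u x) ^ 2 := by ring
        rw [this]; positivity
      have h2 : (∫ x in (0:ℝ)..a,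
          (t ^ 2 * β x ^ 2 + (-2 * t) * (β x * u x) + u x ^ 2))
          = B * (t * t) + (-2 * C) * t + U := by
        rw [intervalIntegral.integral_add ((hβ2.const_mul _).add (hβu.const_mul _)) hu2,
          intervalIntegral.integral_add (hβ2.const_mul _) (hβu.const_mul _),
          intervalIntegral.integral_const_mul, intervalIntegral.integral_const_mul]
        ring
      linarith [h2 ▸ h1]
    have := discrim_le_zero hquad
    rw [discrim] at this
    nlinarith [this]
  have hBnn : 0 ≤ B := by
    apply intervalIntegral.integral_nonneg ha.le
    intro x hx; positivity
  have hUnn : 0 ≤ U := by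
    apply intervalIntegral.integral_nonneg ha.le
    intro x hx; positivity
  -- split the main integral
  have hsplit : (∫ x in (0:ℝ)..a, u x * (u' x + lam * u x))
      = (∫ x in (0:ℝ)..a, u x * u' x) + lam * U := by
    have : (fun x => u x * (u' x + lam * u x))
        = fun x => u x * u' x + lam * u x ^ 2 := by funext x; ring
    rw [this, intervalIntegral.integral_add huu' (hu2.const_mul _),
      intervalIntegral.integral_const_mul]
  constructor
  · rw [hsplit, hftc, hlam]
    have hu0 : u 0 ^ 2 = C ^ 2 := by rw [hbc]
    nlinarith [hCS]
  · positivity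
end
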